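/- arXiv:2409.12543 — 8 statements merged into one kernel-verified Lean document; each statement's English description precedes it below -/
import Mathlib

section
/- Let X be a reflexive real Banach space, Y a real normed linear space, and T a compact linear operator from X to Y with operator norm 1 such that M_T = {x₀, −x₀} for some unit vector x₀ ∈ X. Then either every element of the kernel of T is Birkhoff–James orthogonal to x₀, or T is not a right-symmetric point of the space of compact operators from X to Y (i.e., there exists a compact operator A with A ⊥_B T but T is not Birkhoff–James orthogonal to A, orthogonality taken with respect to the operator norm). -/
/-- Birkhoff–James orthogonality: `x ⊥_B y` iff `‖x + λ • y‖ ≥ ‖x‖` for every real `λ`. -/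
def BJOrth {E : Type*} [NormedAddCommGroup E] [NormedSpace ℝ E] (x y : E) : Prop :=
  ∀ lam : ℝ, ‖x‖ ≤ ‖x + lam • y‖

/-- `x` is a left-symmetric point: `x ⊥_B y` implies `y ⊥_B x` for all `y`. -/
def LeftSymmetricPt {E : Type*} [NormedAddCommGroup E] [NormedSpace ℝ E] (x : E) : Prop :=
  ∀ y : E, BJOrth x y → BJOrth y x

/-- `x` is a right-symmetric point: `y ⊥_B x` implies `x ⊥_B y` for all `y`. -/
def RightSymmetricPt {E : Type*} [NormedAddCommGroup E] [NormedSpace ℝ E] (x : E) : Prop :=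
  ∀ y : E, BJOrth y x → BJOrth x y

/-- A nonzero `x` is a smooth point if there is exactly one norm-one continuous linear
functional `f` with `f x = ‖x‖`. -/
def SmoothPoint {E : Type*} [NormedAddCommGroup E] [NormedSpace ℝ E] (x : E) : Prop :=
  ∃! f : E →L[ℝ] ℝ, ‖f‖ = 1 ∧ f x = ‖x‖

/-- A normed space is reflexive if the canonical embedding into the double dual is onto. -/
def ReflexiveSpace (E : Type*) [NormedAddCommGroup E] [NormedSpace ℝ E] : Prop :=
  Function.Surjective (NormedSpace.inclusionInDoubleDual ℝ E)

/-- `T` (a compact operator) is a right-symmetric point of the space of compact operators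
(with the operator norm): `A ⊥_B T` implies `T ⊥_B A` for every compact operator `A`. -/
def RightSymmetricCompactOp {X Y : Type*} [NormedAddCommGroup X] [NormedSpace ℝ X]
    [NormedAddCommGroup Y] [NormedSpace ℝ Y] (T : X →L[ℝ] Y) : Prop :=
  ∀ A : X →L[ℝ] Y, IsCompactOperator A → BJOrth A T → BJOrth T A

/-- `T` is left orthogonality preserving at `x`: `x ⊥_B y` implies `T x ⊥_B T y`. -/
def LeftOPAt {X Y : Type*} [NormedAddCommGroup X] [NormedSpace ℝ X]
    [NormedAddCommGroup Y] [NormedSpace ℝ Y] (T : X →L[ℝ] Y) (x : X) : Prop :=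
  ∀ y : X, BJOrth x y → BJOrth (T x) (T y)

/-- Approximate Birkhoff–James orthogonality in the sense of Dragomir–Chmieliński:
`x ⊥_D^ε y` iff `‖x + λ • y‖ ≥ √(1 - ε²) * ‖x‖` for every real `λ`. -/
def ApproxOrthD {E : Type*} [NormedAddCommGroup E] [NormedSpace ℝ E]
    (ε : ℝ) (x y : E) : Prop :=
  ∀ lam : ℝ, Real.sqrt (1 - ε ^ 2) * ‖x‖ ≤ ‖x + lam • y‖

/-- Approximate Birkhoff–James orthogonality in the sense of Chmieliński:
`x ⊥_B^ε y` iff `‖x + λ • y‖² ≥ ‖x‖² - 2ε‖x‖‖λ • y‖` for every real `λ`. -/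
def ApproxOrthC {E : Type*} [NormedAddCommGroup E] [NormedSpace ℝ E]
    (ε : ℝ) (x y : E) : Prop :=
  ∀ lam : ℝ, ‖x‖ ^ 2 - 2 * ε * ‖x‖ * ‖lam • y‖ ≤ ‖x + lam • y‖ ^ 2

/-!
Take `y ∈ ker T` not orthogonal to `x₀` and a norming functional `g` of `y`; then `g x₀ ≠ 0`.
The rank-one operator `A = g ⊗ T x₀` attains its norm at `y ∈ ker T`, hence `A ⊥_B T`.
On the other hand `T - (g x₀)⁻¹ A` vanishes on `M_T = {±x₀}`. Since `T` is compact and the unit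
ball of `X` is weakly compact, the points where `T` almost attains its norm are close to `M_T`
(as seen through `T` and `A`), and convexity of the norm then gives `‖T + tλA‖ < ‖T‖` for a small
`t > 0`, so `T` is not orthogonal to `A`.
-/

open Metric Filter Topology NormedSpace

theorem IsCompactOperator.prodMk {M₁ M₂ M₃ : Type*} [Zero M₁] [TopologicalSpace M₁]
    [TopologicalSpace M₂] [TopologicalSpace M₃] {f : M₁ → M₂} {g : M₁ → M₃}
    (hf : IsCompactOperator f) (hg : IsCompactOperator g) :
    IsCompactOperator fun x => (f x, g x) := by
  obtain ⟨K, hK, hfK⟩ := hf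
  obtain ⟨L, hL, hgL⟩ := hg
  exact ⟨K ×ˢ L, hK.prod hL, inter_mem hfK hgL⟩

theorem ContinuousLinearMap.isCompactOperator_smulRight {𝕜 X Y : Type*}
    [NontriviallyNormedField 𝕜] [LocallyCompactSpace 𝕜]
    [NormedAddCommGroup X] [NormedSpace 𝕜 X] [NormedAddCommGroup Y] [NormedSpace 𝕜 Y]
    (g : StrongDual 𝕜 X) (v : Y) : IsCompactOperator (g.smulRight v) :=
  (isCompactOperator_of_locallyCompactSpace_dom g).continuous_comp
    (continuous_id.smul continuous_const)

theorem norm_add_smul_le {E : Type*} [SeminormedAddCommGroup E] [NormedSpace ℝ E] (a b : E)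
    {t : ℝ} (ht₀ : 0 ≤ t) (ht₁ : t ≤ 1) : ‖a + t • b‖ ≤ (1 - t) * ‖a‖ + t * ‖a + b‖ := by
  calc ‖a + t • b‖ = ‖(1 - t) • a + t • (a + b)‖ := by congr 1; module
    _ ≤ (1 - t) * ‖a‖ + t * ‖a + b‖ := by
      refine (norm_add_le _ _).trans_eq ?_
      rw [norm_smul, norm_smul, Real.norm_of_nonneg (by linarith), Real.norm_of_nonneg ht₀]

theorem bjOrth_of_norming_functional {E : Type*} [NormedAddCommGroup E] [NormedSpace ℝ E]
    {g : StrongDual ℝ E} {x y : E} (hg : ‖g‖ ≤ 1) (hgx : g x = ‖x‖) (hgy : g y = 0) :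
    BJOrth x y := fun lam =>
  calc ‖x‖ = g (x + lam • y) := by simp [hgx, hgy]
    _ ≤ ‖g‖ * ‖x + lam • y‖ := (le_abs_self _).trans (g.le_opNorm _)
    _ ≤ ‖x + lam • y‖ := mul_le_of_le_one_left (norm_nonneg _) hg

theorem ContinuousLinearMap.bjOrth_of_apply_eq_zero {X Y : Type*} [NormedAddCommGroup X]
    [NormedSpace ℝ X] [NormedAddCommGroup Y] [NormedSpace ℝ Y] {A B : X →L[ℝ] Y} {u : X}
    (hu : u ≠ 0) (hAu : ‖A‖ * ‖u‖ ≤ ‖A u‖) (hBu : B u = 0) : BJOrth A B := fun lam => by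
  refine le_of_mul_le_mul_right ?_ (norm_pos_iff.2 hu)
  calc ‖A‖ * ‖u‖ ≤ ‖(A + lam • B) u‖ := by simpa [hBu] using hAu
    _ ≤ ‖A + lam • B‖ * ‖u‖ := le_opNorm _ _

section Reflexive

variable {X : Type*} [NormedAddCommGroup X] [NormedSpace ℝ X]

theorem ReflexiveSpace.isCompact_image_closedBall (hX : ReflexiveSpace X) (r : ℝ) :
    IsCompact (toWeakSpace ℝ X '' closedBall 0 r) := by
  have hrange : Set.range (inclusionInDoubleDualWeak ℝ X) = Set.univ := by
    refine Set.eq_univ_of_forall fun Φ => ?_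
    obtain ⟨x, hx⟩ := hX (WeakDual.toStrongDual Φ)
    exact ⟨toWeakSpace ℝ X x, hx⟩
  rw [← isClosed_closedBall.closure_eq,
    (convex_closedBall (0 : X) r).toWeakSpace_closure (𝕜 := ℝ)]
  refine isCompact_closure_of_isBounded ℝ X _ ?_ (by simp [hrange])
  simpa [Set.preimage_image_eq _ (toWeakSpace ℝ X).injective] using isBounded_closedBall

theorem ReflexiveSpace.exists_mapClusterPt (hX : ReflexiveSpace X) {ι : Type*} {l : Filter ι}
    [l.NeBot] {u : ι → X} {r : ℝ} (hu : ∀ i, ‖u i‖ ≤ r) :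
    ∃ x, ‖x‖ ≤ r ∧ MapClusterPt (toWeakSpace ℝ X x) l (toWeakSpace ℝ X ∘ u) := by
  obtain ⟨-, ⟨x, hx, rfl⟩, hux⟩ := (hX.isCompact_image_closedBall r).exists_mapClusterPt
    (f := l) (u := toWeakSpace ℝ X ∘ u) (le_principal_iff.2 (mem_map.2 (univ_mem' fun i =>
      ⟨u i, mem_closedBall_zero_iff.2 (hu i), rfl⟩)))
  exact ⟨x, mem_closedBall_zero_iff.1 hx, hux⟩

/-- Compactness of `T` gives a norm-convergent subsequence of `T ∘ u`, and reflexivity identifies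
its limit as `T x` for a weak cluster point `x` of that subsequence. -/
theorem IsCompactOperator.tendsto_subseq {Y : Type*} [NormedAddCommGroup Y] [NormedSpace ℝ Y]
    (hX : ReflexiveSpace X) {T : X →L[ℝ] Y} (hT : IsCompactOperator T) {u : ℕ → X} {r : ℝ}
    (hu : ∀ k, ‖u k‖ ≤ r) :
    ∃ x, ‖x‖ ≤ r ∧ ∃ φ : ℕ → ℕ, StrictMono φ ∧ Tendsto (fun k => T (u (φ k))) atTop (𝓝 (T x)) := by
  obtain ⟨K, hK, hTK⟩ := hT.image_closedBall_subset_compact r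
  obtain ⟨z, -, φ, hφ, hz⟩ :=
    hK.tendsto_subseq fun k => hTK ⟨u k, mem_closedBall_zero_iff.2 (hu k), rfl⟩
  obtain ⟨x, hx, hux⟩ := hX.exists_mapClusterPt (l := atTop) fun k => hu (φ k)
  refine ⟨x, hx, φ, hφ, ?_⟩
  suffices T x = z by rwa [this]
  refine (SeparatingDual.eq_iff_forall_dual_eq (R := ℝ)).2 fun f => ?_
  have hfT : MapClusterPt (f (T x)) atTop fun k => f (T (u (φ k))) :=
    hux.continuousAt_comp (f := fun ξ : WeakSpace ℝ X => f (T ξ))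
      (WeakBilin.eval_continuous _ (f.comp T)).continuousAt
  exact eq_of_nhds_neBot (ClusterPt.mono hfT ((f.continuous.tendsto z).comp hz)).neBot

end Reflexive

section Operators

variable {X Y Z : Type*} [NormedAddCommGroup X] [NormedSpace ℝ X]
  [NormedAddCommGroup Y] [NormedSpace ℝ Y] [NormedAddCommGroup Z] [NormedSpace ℝ Z]

/-- The norm attainment set `M_T`. -/
def normAttainSet (T : X →L[ℝ] Y) : Set X := {x | ‖x‖ = 1 ∧ ‖T x‖ = ‖T‖}

theorem exists_forall_near_normAttainSet (hX : ReflexiveSpace X) {T : X →L[ℝ] Y}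
    (hT : IsCompactOperator T) (hT₀ : T ≠ 0) {S : X →L[ℝ] Z} (hS : IsCompactOperator S)
    {ε : ℝ} (hε : 0 < ε) :
    ∃ δ > 0, ∀ u, ‖u‖ ≤ 1 → ‖T‖ - δ ≤ ‖T u‖ →
      ∃ x ∈ normAttainSet T, ‖T u - T x‖ < ε ∧ ‖S u - S x‖ < ε := by
  by_contra! h
  choose u hu hTu hfar using fun k : ℕ => h (1 / (k + 1)) Nat.one_div_pos_of_nat
  obtain ⟨x, hx, φ, hφ, hlim⟩ := (hT.prodMk hS).tendsto_subseq hX (T := T.prod S) hu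
  have hTx : ‖T‖ ≤ ‖T x‖ := by
    have hδ : Tendsto (fun k => ‖T‖ - 1 / ((φ k : ℝ) + 1)) atTop (𝓝 (‖T‖ - 0)) :=
      tendsto_const_nhds.sub (tendsto_one_div_add_atTop_nhds_zero_nat.comp hφ.tendsto_atTop)
    rw [sub_zero] at hδ
    exact le_of_tendsto_of_tendsto' hδ ((continuous_fst.norm.tendsto _).comp hlim)
      fun k => hTu (φ k)
  have hxM : x ∈ normAttainSet T := by
    have hTpos : 0 < ‖T‖ := norm_pos_iff.2 hT₀
    have hTx' : ‖T x‖ ≤ ‖T‖ * ‖x‖ := T.le_opNorm x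
    have hx1 : ‖x‖ = 1 := le_antisymm hx (by nlinarith)
    exact ⟨hx1, le_antisymm (by simpa [hx1] using hTx') hTx⟩
  obtain ⟨k, hk⟩ := (hlim.eventually (ball_mem_nhds _ hε)).exists
  rw [Prod.dist_eq, max_lt_iff, dist_eq_norm, dist_eq_norm] at hk
  exact (hfar (φ k) x hxM hk.1).not_gt hk.2

/-- Convexity of the norm transfers the estimate at `lam` to `t * lam` at the cost of a factor `t`;
where `‖T u‖ < ‖T‖ - δ`, a small enough `t` keeps `‖T u + t • lam • A u‖` below `‖T‖`. -/
theorem not_bjOrth_of_norm_apply_add_smul_le {T A : X →L[ℝ] Y} (hT₀ : T ≠ 0) {lam δ η : ℝ}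
    (hδ : 0 < δ) (hη : 0 < η)
    (h : ∀ u, ‖u‖ ≤ 1 → ‖T‖ - δ ≤ ‖T u‖ → ‖T u + lam • A u‖ ≤ ‖T‖ - η) :
    ¬ BJOrth T A := by
  set C := |lam| * ‖A‖ + 1
  have hC : 0 < C := by positivity
  set t := min 1 (δ / (2 * C))
  have ht₀ : 0 < t := lt_min one_pos (by positivity)
  have ht₁ : t ≤ 1 := min_le_left _ _
  have htA : t * (|lam| * ‖A‖) ≤ δ / 2 :=
    calc t * (|lam| * ‖A‖) ≤ δ / (2 * C) * C := by gcongr <;> simp [t, C]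
      _ = δ / 2 := by field_simp
  set m := min (δ / 2) (t * η)
  have hbound : ∀ u, ‖u‖ = 1 → ‖(T + (t * lam) • A) u‖ ≤ ‖T‖ - m := by
    intro u hu
    rw [add_apply, smul_apply, mul_smul]
    by_cases hfar : ‖T u‖ < ‖T‖ - δ
    · calc ‖T u + t • lam • A u‖ ≤ ‖T u‖ + t * (|lam| * ‖A‖) := by
            refine (norm_add_le _ _).trans ?_
            rw [norm_smul, norm_smul, Real.norm_of_nonneg ht₀.le, Real.norm_eq_abs]
            gcongr
            exact A.unit_le_opNorm u hu.le
        _ ≤ ‖T‖ - m := by linarith [min_le_left (δ / 2) (t * η)]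
    · calc ‖T u + t • lam • A u‖ ≤ (1 - t) * ‖T u‖ + t * ‖T u + lam • A u‖ :=
            norm_add_smul_le _ _ ht₀.le ht₁
        _ ≤ (1 - t) * ‖T‖ + t * (‖T‖ - η) := by
            have := sub_nonneg.2 ht₁
            gcongr
            · exact T.unit_le_opNorm u hu.le
            · exact h u hu.le (not_lt.1 hfar)
        _ ≤ ‖T‖ - m := by linarith [min_le_right (δ / 2) (t * η)]
  intro hB
  have hle : ‖T + (t * lam) • A‖ ≤ max 0 (‖T‖ - m) :=
    ContinuousLinearMap.opNorm_le_of_unit_norm (le_max_left _ _) fun u hu =>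
      (hbound u hu).trans (le_max_right _ _)
  have hlt : max 0 (‖T‖ - m) < ‖T‖ :=
    max_lt (norm_pos_iff.2 hT₀) (by linarith [show 0 < m by positivity])
  linarith [hB (t * lam)]

theorem not_bjOrth_of_forall_normAttainSet (hX : ReflexiveSpace X) {T A : X →L[ℝ] Y}
    (hT : IsCompactOperator T) (hT₀ : T ≠ 0) (hA : IsCompactOperator A) {lam η : ℝ}
    (hη : 0 < η) (h : ∀ x ∈ normAttainSet T, ‖T x + lam • A x‖ ≤ ‖T‖ - η) :
    ¬ BJOrth T A := by
  set ε := η / (2 * (1 + |lam|))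
  have hε : ε * (1 + |lam|) = η / 2 := by simp only [ε]; field_simp
  obtain ⟨δ, hδ, hnear⟩ := exists_forall_near_normAttainSet hX hT hT₀ hA (ε := ε) (by positivity)
  refine not_bjOrth_of_norm_apply_add_smul_le (lam := lam) hT₀ hδ (half_pos hη) fun u hu hTu => ?_
  obtain ⟨x, hx, hTux, hAux⟩ := hnear u hu hTu
  calc ‖T u + lam • A u‖ = ‖(T x + lam • A x) + (T u - T x) + lam • (A u - A x)‖ := by
        congr 1; module
    _ ≤ ‖T x + lam • A x‖ + ‖T u - T x‖ + |lam| * ‖A u - A x‖ := by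
        rw [← Real.norm_eq_abs, ← norm_smul]; exact norm_add₃_le
    _ ≤ (‖T‖ - η) + ε + |lam| * ε := by gcongr; exact h x hx
    _ = ‖T‖ - η / 2 := by linarith

end Operators

theorem ker_orth_or_not_rightSymmetric_general {X Y : Type*}
    [NormedAddCommGroup X] [NormedSpace ℝ X]
    [NormedAddCommGroup Y] [NormedSpace ℝ Y]
    (hX : ReflexiveSpace X)
    (T : X →L[ℝ] Y) (hTc : IsCompactOperator T) (hT : ‖T‖ = 1)
    (x₀ : X)
    (hMT : {x : X | ‖x‖ = 1 ∧ ‖T x‖ = ‖T‖} = {x₀, -x₀}) :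
    (∀ y ∈ LinearMap.ker (T : X →ₗ[ℝ] Y), BJOrth y x₀) ∨
      ∃ A : X →L[ℝ] Y, IsCompactOperator A ∧ BJOrth A T ∧ ¬ BJOrth T A := by
  refine or_iff_not_imp_left.2 fun hker => ?_
  push Not at hker
  obtain ⟨y, hyT, hyx₀⟩ := hker
  have hy : y ≠ 0 := by rintro rfl; exact hyx₀ fun lam => by simp
  obtain ⟨g, hg, hgy⟩ := exists_dual_vector ℝ y (norm_ne_zero_iff.2 hy)
  have hgx₀ : g x₀ ≠ 0 := fun h => hyx₀ (bjOrth_of_norming_functional hg.le hgy h)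
  have hMT' : normAttainSet T = {x₀, -x₀} := hMT
  have hTx₀ : ‖T x₀‖ = 1 := (hMT' ▸ Set.mem_insert x₀ {-x₀} : x₀ ∈ normAttainSet T).2.trans hT
  have hT₀ : T ≠ 0 := by rintro rfl; simp at hT
  -- `A x = g x • T x₀`, so `T - (g x₀)⁻¹ • A` vanishes on `M_T = {±x₀}`.
  set A := g.smulRight (T x₀)
  have hA : IsCompactOperator A := g.isCompactOperator_smulRight _
  refine ⟨A, hA, A.bjOrth_of_apply_eq_zero hy ?_ hyT, ?_⟩
  · simp [A, ContinuousLinearMap.norm_smulRight_apply, hg, hTx₀, hgy, norm_smul]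
  refine not_bjOrth_of_forall_normAttainSet hX hTc hT₀ hA (lam := -(g x₀)⁻¹) one_pos ?_
  intro x hx
  rw [hMT'] at hx
  rcases hx with rfl | rfl <;> simp [A, hT, hgx₀]

/-- For a norm-one compact operator `T` from a reflexive Banach space `X` to a
normed space `Y` with `M_T = {x₀, -x₀}`, either every element of `ker T` is Birkhoff–James
orthogonal to `x₀`, or `T` is not right-symmetric in the space of compact operators. -/
theorem ker_orth_or_not_rightSymmetric {X Y : Type*}
    [NormedAddCommGroup X] [NormedSpace ℝ X] [CompleteSpace X]
    [NormedAddCommGroup Y] [NormedSpace ℝ Y]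
    (hX : ReflexiveSpace X)
    (T : X →L[ℝ] Y) (hTc : IsCompactOperator T) (hT : ‖T‖ = 1)
    (x₀ : X) (hx₀ : ‖x₀‖ = 1)
    (hMT : {x : X | ‖x‖ = 1 ∧ ‖T x‖ = ‖T‖} = {x₀, -x₀}) :
    (∀ y ∈ LinearMap.ker (T : X →ₗ[ℝ] Y), BJOrth y x₀) ∨
      ∃ A : X →L[ℝ] Y, IsCompactOperator A ∧ BJOrth A T ∧ ¬ BJOrth T A :=
  ker_orth_or_not_rightSymmetric_general hX T hTc hT x₀ hMT
end

section
/- Let X and Y be real normed linear spaces, T a bounded linear operator from X to Y with operator norm 1, and x₀ a unit vector with x₀ ∈ M_T. Suppose T is left orthogonality preserving at x₀. If Tx₀ is a smooth point of Y, then x₀ is a smooth point of X. -/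
section

variable {E : Type*} [NormedAddCommGroup E] [NormedSpace ℝ E]

def IsSupportFunctional (f : E →L[ℝ] ℝ) (x : E) : Prop :=
  ‖f‖ = 1 ∧ f x = ‖x‖

theorem isSupportFunctional_of_norm_le_one {f : E →L[ℝ] ℝ} {x : E} (hx : x ≠ 0)
    (hf : ‖f‖ ≤ 1) (hfx : f x = ‖x‖) : IsSupportFunctional f x := by
  refine ⟨le_antisymm hf ?_, hfx⟩
  have hx' : 0 < ‖x‖ := norm_pos_iff.2 hx
  have := f.le_opNorm x
  rw [hfx, Real.norm_of_nonneg hx'.le] at this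
  nlinarith

theorem exists_isSupportFunctional {x : E} (hx : x ≠ 0) : ∃ f, IsSupportFunctional f x :=
  (exists_dual_vector ℝ x (norm_ne_zero_iff.2 hx)).imp fun _ hf => hf

theorem IsSupportFunctional.bjOrth {f : E →L[ℝ] ℝ} {x y : E} (hf : IsSupportFunctional f x)
    (hfy : f y = 0) : BJOrth x y := fun lam =>
  calc ‖x‖ = f (x + lam • y) := by simp [hf.2, hfy, map_smul]
    _ ≤ ‖f‖ * ‖x + lam • y‖ := (le_abs_self _).trans (f.le_opNorm _)
    _ = ‖x + lam • y‖ := by rw [hf.1, one_mul]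

theorem BJOrth.exists_isSupportFunctional {x y : E} (hx : x ≠ 0) (h : BJOrth x y) :
    ∃ f, IsSupportFunctional f x ∧ f y = 0 := by
  -- Orthogonality says the quotient norm of `x` modulo `ℝ ∙ y` is `‖x‖`; apply Hahn–Banach there.
  set S := ℝ ∙ y
  have : IsClosed (S : Set E) := S.closed_of_finiteDimensional
  have hq : ∀ m : E, ‖S.mkQL m‖ ≤ ‖m‖ := Submodule.Quotient.norm_mk_le S
  have hqx : ‖S.mkQL x‖ = ‖x‖ := by
    refine le_antisymm (hq x) (QuotientAddGroup.le_norm_iff.2 fun m hm => ?_)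
    obtain ⟨c, hc⟩ := Submodule.mem_span_singleton.1 ((Submodule.Quotient.eq S).1 hm)
    rw [show m = x + c • y by rw [hc]; abel]
    exact h c
  obtain ⟨g, hg, hgx⟩ := exists_dual_vector ℝ (S.mkQL x) (hqx ▸ norm_ne_zero_iff.2 hx)
  refine ⟨g ∘L S.mkQL, isSupportFunctional_of_norm_le_one hx ?_ ?_, ?_⟩
  · refine (g ∘L S.mkQL).opNorm_le_bound zero_le_one fun m => ?_
    calc ‖g (S.mkQL m)‖ ≤ ‖g‖ * ‖S.mkQL m‖ := g.le_opNorm _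
      _ ≤ 1 * ‖m‖ := by rw [hg, one_mul, one_mul]; exact hq m
  · rw [hqx] at hgx
    exact hgx
  · simp [(Submodule.Quotient.mk_eq_zero S).2 (Submodule.mem_span_singleton_self y)]

theorem SmoothPoint.ne_zero {x : E} (hx : SmoothPoint x) : x ≠ 0 := by
  rintro rfl
  obtain ⟨f, ⟨hf, -⟩, huniq⟩ := hx
  have hneg : -f = f := huniq (-f) ⟨by rw [norm_neg, hf], by simp⟩
  rw [neg_eq_iff_add_eq_zero, ← two_smul ℝ, smul_eq_zero_iff_right two_ne_zero] at hneg
  simp [hneg] at hf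

theorem LeftOPAt.norm_smul_eq_norm_smul_comp {F : Type*} [NormedAddCommGroup F] [NormedSpace ℝ F]
    {T : E →L[ℝ] F} {x : E} (hop : LeftOPAt T x) (hsm : SmoothPoint (T x))
    {f : E →L[ℝ] ℝ} {g : F →L[ℝ] ℝ} (hf : IsSupportFunctional f x)
    (hg : IsSupportFunctional g (T x)) : ‖T x‖ • f = ‖x‖ • g ∘L T := by
  ext y
  set z := ‖x‖ • y - f y • x
  have hfz : f z = 0 := by simp [z, hf.2, mul_comm]
  obtain ⟨h, hh, hhz⟩ := (hop z (hf.bjOrth hfz)).exists_isSupportFunctional hsm.ne_zero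
  have hgz : g (T z) = 0 := hsm.unique hh hg ▸ hhz
  simp only [z, map_sub, map_smul, hg.2, smul_eq_mul] at hgz
  simp only [FunLike.coe_smul, Pi.smul_apply, ContinuousLinearMap.comp_apply,
    smul_eq_mul]
  linarith

end

theorem smooth_of_image_smooth_general {X Y : Type*} [NormedAddCommGroup X] [NormedSpace ℝ X]
    [NormedAddCommGroup Y] [NormedSpace ℝ Y]
    (T : X →L[ℝ] Y) (x₀ : X)
    (hop : LeftOPAt T x₀)
    (hsm : SmoothPoint (T x₀)) :
    SmoothPoint x₀ := by
  have hTx₀ : T x₀ ≠ 0 := hsm.ne_zero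
  obtain ⟨g, hg⟩ := hsm.exists
  obtain ⟨f, hf⟩ := exists_isSupportFunctional fun h : x₀ = 0 => hTx₀ (by simp [h])
  refine ⟨f, hf, fun f' hf' => smul_right_injective _ (norm_ne_zero_iff.2 hTx₀) ?_⟩
  exact (hop.norm_smul_eq_norm_smul_comp hsm hf' hg).trans
    (hop.norm_smul_eq_norm_smul_comp hsm hf hg).symm

/-- If `‖T‖ = 1`, `x₀ ∈ M_T` is a unit vector, `T` is left orthogonality
preserving at `x₀`, and `T x₀` is a smooth point, then `x₀` is a smooth point. -/
theorem smooth_of_image_smooth {X Y : Type*} [NormedAddCommGroup X] [NormedSpace ℝ X]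
    [NormedAddCommGroup Y] [NormedSpace ℝ Y]
    (T : X →L[ℝ] Y) (hT : ‖T‖ = 1) (x₀ : X) (hx₀ : ‖x₀‖ = 1)
    (hMT : ‖T x₀‖ = ‖T‖)
    (hop : LeftOPAt T x₀)
    (hsm : SmoothPoint (T x₀)) :
    SmoothPoint x₀ :=
  smooth_of_image_smooth_general T x₀ hop hsm
end

section
/- Let X and Y be real normed linear spaces, T a bounded linear operator from X onto Y (T surjective) with operator norm 1, and x₀ a unit vector with x₀ ∈ M_T. Suppose T is left orthogonality preserving at x₀. If x₀ is a smooth point of X, then Tx₀ is a smooth point of Y. -/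
/-!
If `g` is a norm-one functional supporting
`T x₀`, then `g ∘ T` is a norm-one functional supporting `x₀`: its norm is at most `‖T‖ = 1`,
and it attains `‖T x₀‖ = ‖x₀‖` at `x₀`. Smoothness of `x₀` therefore forces `g ∘ T` to be the
same for every such `g`, and since `T` is onto, `g` itself is unique.
-/

section NormingFunctional

variable {E X Y : Type*} [NormedAddCommGroup E] [NormedSpace ℝ E]
  [NormedAddCommGroup X] [NormedSpace ℝ X] [NormedAddCommGroup Y] [NormedSpace ℝ Y]

def IsNormingFunctional (x : E) (f : E →L[ℝ] ℝ) : Prop :=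
  ‖f‖ = 1 ∧ f x = ‖x‖

theorem exists_isNormingFunctional {x : E} (hx : x ≠ 0) : ∃ f, IsNormingFunctional x f :=
  exists_dual_vector ℝ x (norm_ne_zero_iff.mpr hx)

theorem IsNormingFunctional.comp {T : X →L[ℝ] Y} (hT : ‖T‖ ≤ 1) {x : X} (hx : x ≠ 0)
    (hTx : ‖T x‖ = ‖x‖) {g : Y →L[ℝ] ℝ} (hg : IsNormingFunctional (T x) g) :
    IsNormingFunctional x (g.comp T) := by
  have hval : g.comp T x = ‖x‖ := hg.2.trans hTx
  refine ⟨le_antisymm ?_ ?_, hval⟩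
  · calc ‖g.comp T‖ ≤ ‖g‖ * ‖T‖ := g.opNorm_comp_le T
      _ ≤ 1 := by rw [hg.1, one_mul]; exact hT
  · have hle := (g.comp T).le_opNorm x
    rw [hval, norm_norm] at hle
    exact le_of_mul_le_mul_right (by rwa [one_mul]) (norm_pos_iff.mpr hx)

theorem SmoothPoint.map_of_surjective {T : X →L[ℝ] Y} (hsurj : Function.Surjective T)
    (hT : ‖T‖ ≤ 1) {x : X} (hx : x ≠ 0) (hTx : ‖T x‖ = ‖x‖) (hsm : SmoothPoint x) :
    SmoothPoint (T x) := by
  have hTx_ne : T x ≠ 0 := norm_ne_zero_iff.mp (hTx ▸ norm_ne_zero_iff.mpr hx)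
  obtain ⟨g₀, hg₀⟩ := exists_isNormingFunctional hTx_ne
  refine ⟨g₀, hg₀, fun g (hg : IsNormingFunctional (T x) g) => ?_⟩
  have hcomp : g.comp T = g₀.comp T := hsm.unique (hg.comp hT hx hTx) (hg₀.comp hT hx hTx)
  ext y
  obtain ⟨x', rfl⟩ := hsurj y
  exact congr($hcomp x')

end NormingFunctional

theorem image_smooth_of_smooth_general {X Y : Type*} [NormedAddCommGroup X] [NormedSpace ℝ X]
    [NormedAddCommGroup Y] [NormedSpace ℝ Y]
    (T : X →L[ℝ] Y) (hsurj : Function.Surjective T) (hT : ‖T‖ = 1)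
    (x₀ : X) (hx₀ : ‖x₀‖ = 1) (hMT : ‖T x₀‖ = ‖T‖)
    (hsm : SmoothPoint x₀) :
    SmoothPoint (T x₀) := by
  have hx₀_ne : x₀ ≠ 0 := norm_ne_zero_iff.mp (by rw [hx₀]; exact one_ne_zero)
  exact hsm.map_of_surjective hsurj hT.le hx₀_ne (by rw [hMT, hT, hx₀])

/-- If `‖T‖ = 1`, `T` is onto, `x₀ ∈ M_T` is a unit vector, `T` is left
orthogonality preserving at `x₀`, and `x₀` is a smooth point, then `T x₀` is a smooth point. -/
theorem image_smooth_of_smooth {X Y : Type*} [NormedAddCommGroup X] [NormedSpace ℝ X]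
    [NormedAddCommGroup Y] [NormedSpace ℝ Y]
    (T : X →L[ℝ] Y) (hsurj : Function.Surjective T) (hT : ‖T‖ = 1)
    (x₀ : X) (hx₀ : ‖x₀‖ = 1) (hMT : ‖T x₀‖ = ‖T‖)
    (hop : LeftOPAt T x₀)
    (hsm : SmoothPoint x₀) :
    SmoothPoint (T x₀) :=
  image_smooth_of_smooth_general T hsurj hT x₀ hx₀ hMT hsm
end

section
/- Let X be a reflexive real Banach space, Y a real normed linear space, and T a compact linear operator from X to Y with operator norm 1 such that M_T = {x₀, −x₀} for some unit vector x₀ ∈ X. Suppose T is left orthogonality preserving at x₀. If T is a right-symmetric point of the space of compact operators from X to Y (with the operator norm), then x₀ is a left-symmetric point of X. -/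
/-!
Let `x₀ ⊥_B y` with `y ≠ 0` and let `g` be a norm-one functional with `g y = ‖y‖`. Since `T`
preserves orthogonality at `x₀`, the rank-one operator `A = g ⊗ T x₀` satisfies `A ⊥_B T`, so
`T ⊥_B A` by right-symmetry. For compact operators on a reflexive space, `T ⊥_B A` produces, for
every `λ`, a weak cluster point `x` of almost norming vectors of `T + (λ / n) • A`; compactness
makes `T x` and `A x` norm limits, so `x ∈ M_T` and `‖T x + λ • A x‖ ≥ ‖T‖`. As `M_T = {±x₀}`
this says `T x₀ ⊥_B A x₀ = g x₀ • T x₀`, which forces `g x₀ = 0`, and then `g` witnesses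
`y ⊥_B x₀`.
-/

open Filter Topology NormedSpace

section Orthogonality

variable {E : Type*} [NormedAddCommGroup E] [NormedSpace ℝ E]

theorem bjOrth_zero_left (x : E) : BJOrth 0 x := fun lam => by
  rw [norm_zero]; exact norm_nonneg _

theorem BJOrth.eq_zero_of_smul_self {x : E} {c : ℝ} (hx : x ≠ 0) (h : BJOrth x (c • x)) :
    c = 0 := by
  by_contra hc
  have := h (-c⁻¹)
  rw [smul_smul, neg_mul, inv_mul_cancel₀ hc, neg_one_smul, add_neg_cancel, norm_zero] at this
  exact hx (norm_le_zero_iff.mp this)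

theorem bjOrth_of_dual_apply_eq_zero {x y : E} {f : StrongDual ℝ E} (hf : ‖f‖ ≤ 1)
    (hfy : f y = ‖y‖) (hfx : f x = 0) : BJOrth y x := fun lam =>
  calc ‖y‖ = f (y + lam • x) := by rw [map_add, map_smul, hfx, smul_zero, add_zero, hfy]
    _ ≤ ‖f (y + lam • x)‖ := le_abs_self _
    _ ≤ ‖y + lam • x‖ := f.le_of_opNorm_le hf _ |>.trans_eq (one_mul _)

theorem norm_add_mul_smul_le (a b : E) {θ : ℝ} (hθ₀ : 0 ≤ θ) (hθ₁ : θ ≤ 1) (lam : ℝ) :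
    ‖a + (θ * lam) • b‖ ≤ (1 - θ) * ‖a‖ + θ * ‖a + lam • b‖ := by
  have hconv : a + (θ * lam) • b = (1 - θ) • a + θ • (a + lam • b) := by
    rw [smul_add, smul_smul, ← add_assoc, ← add_smul, sub_add_cancel, one_smul]
  rw [hconv]
  refine (norm_add_le _ _).trans_eq ?_
  rw [norm_smul, norm_smul, Real.norm_of_nonneg (sub_nonneg.mpr hθ₁), Real.norm_of_nonneg hθ₀]

end Orthogonality

section Compactness

variable {X Y Z : Type*} [NormedAddCommGroup X] [NormedSpace ℝ X]
  [NormedAddCommGroup Y] [NormedSpace ℝ Y] [NormedAddCommGroup Z] [NormedSpace ℝ Z]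

theorem IsCompactOperator.prod {T : X →L[ℝ] Y} {A : X →L[ℝ] Z} (hT : IsCompactOperator T)
    (hA : IsCompactOperator A) : IsCompactOperator (T.prod A) := by
  obtain ⟨KT, hKT, hT0⟩ := hT
  obtain ⟨KA, hKA, hA0⟩ := hA
  exact ⟨KT ×ˢ KA, hKT.prod hKA, inter_mem hT0 hA0⟩

theorem isCompactOperator_smulRight (f : StrongDual ℝ X) (y : Y) :
    IsCompactOperator (f.smulRight y) :=
  (isCompactOperator_of_locallyCompactSpace_dom f).continuous_comp
    (continuous_id.smul continuous_const)

theorem ReflexiveSpace.exists_mapClusterPt_dual (hX : ReflexiveSpace X) {ι : Type*}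
    {l : Filter ι} [l.NeBot] {u : ι → X} {r : ℝ} (hu : ∀ i, ‖u i‖ ≤ r) :
    ∃ x, ‖x‖ ≤ r ∧ ∀ f : StrongDual ℝ X, MapClusterPt (f x) l (fun i => f (u i)) := by
  set J := inclusionInDoubleDual ℝ X
  have hball : ∀ i, StrongDual.toWeakDual (J (u i)) ∈
      WeakDual.toStrongDual ⁻¹' Metric.closedBall (0 : StrongDual ℝ (StrongDual ℝ X)) r :=
    fun i => by
      rw [Set.mem_preimage, mem_closedBall_zero_iff (E := StrongDual ℝ (StrongDual ℝ X))]
      exact (double_dual_bound ℝ X (u i)).trans (hu i)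
  obtain ⟨Φ, hΦr, hΦ⟩ := (WeakDual.isCompact_closedBall 0 r).exists_mapClusterPt
    (f := l) (tendsto_principal.mpr (Eventually.of_forall hball))
  obtain ⟨x, hx⟩ := hX (WeakDual.toStrongDual Φ)
  refine ⟨x, ?_, fun f => ?_⟩
  · rw [← (inclusionInDoubleDualLi (E := X) ℝ).norm_map x]
    exact hx ▸ mem_closedBall_zero_iff.mp hΦr
  · have hfx : f x = Φ f := congrArg (fun φ => φ f) hx
    rw [hfx]
    exact hΦ.tendsto_comp (f := fun Ψ => Ψ f) ((WeakDual.eval_continuous f).tendsto Φ)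

theorem IsCompactOperator.exists_subseq_tendsto (hX : ReflexiveSpace X) {K : X →L[ℝ] Y}
    (hK : IsCompactOperator K) {u : ℕ → X} (hu : ∀ n, ‖u n‖ ≤ 1) :
    ∃ x, ‖x‖ ≤ 1 ∧ ∃ φ : ℕ → ℕ, StrictMono φ ∧ Tendsto (K ∘ u ∘ φ) atTop (𝓝 (K x)) := by
  obtain ⟨z, -, φ, hφ, hz⟩ := (hK.isCompact_closure_image_closedBall 1).tendsto_subseq
    fun n => subset_closure ⟨u n, mem_closedBall_zero_iff.mpr (hu n), rfl⟩
  obtain ⟨x, hx, hclust⟩ := hX.exists_mapClusterPt_dual (l := atTop) (fun n => hu (φ n))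
  suffices K x = z from ⟨x, hx, φ, hφ, this ▸ hz⟩
  refine (SeparatingDual.eq_iff_forall_dual_eq (R := ℝ)).mpr fun ψ => ?_
  have hlim : Tendsto (fun n => (ψ.comp K) (u (φ n))) atTop (𝓝 (ψ z)) :=
    (ψ.continuous.tendsto z).comp hz
  exact @eq_of_nhds_neBot _ _ _ _ _ ((hclust (ψ.comp K)).clusterPt.mono hlim)

end Compactness

section NormAttainment

variable {X Y : Type*} [NormedAddCommGroup X] [NormedSpace ℝ X]
  [NormedAddCommGroup Y] [NormedSpace ℝ Y] {T A : X →L[ℝ] Y}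

/-- The slack `θ ^ 2` for `T + (θ * lam) • A` becomes `θ` for `T + lam • A`, by convexity of
`t ↦ ‖T u + t • A u‖` between `0` and `lam`. -/
theorem BJOrth.exists_near_norming (h : BJOrth T A) (lam : ℝ) {θ : ℝ} (hθ₀ : 0 < θ)
    (hθ₁ : θ ≤ 1) :
    ∃ u : X, ‖u‖ ≤ 1 ∧ ‖T‖ - θ * (θ + |lam| * ‖A‖) ≤ ‖T u‖ ∧
      ‖T‖ - θ ≤ ‖T u + lam • A u‖ := by
  obtain ⟨u, hu, hnear⟩ := (T + (θ * lam) • A).exists_lt_apply_of_lt_opNorm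
    (show ‖T‖ - θ ^ 2 < ‖T + (θ * lam) • A‖ by nlinarith [h (θ * lam)])
  have hu1 : ‖u‖ ≤ 1 := hu.le
  have happly : (T + (θ * lam) • A) u = T u + (θ * lam) • A u := rfl
  rw [happly] at hnear
  have hTu : ‖T u‖ ≤ ‖T‖ := T.unit_le_opNorm u hu1
  have hAu : ‖A u‖ ≤ ‖A‖ := A.unit_le_opNorm u hu1
  refine ⟨u, hu1, ?_, ?_⟩
  · have htri : ‖T u + (θ * lam) • A u‖ ≤ ‖T u‖ + θ * (|lam| * ‖A‖) :=
      calc ‖T u + (θ * lam) • A u‖ ≤ ‖T u‖ + ‖(θ * lam) • A u‖ := norm_add_le _ _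
        _ = ‖T u‖ + θ * (|lam| * ‖A u‖) := by
          rw [norm_smul, Real.norm_eq_abs, abs_mul, abs_of_pos hθ₀, mul_assoc]
        _ ≤ ‖T u‖ + θ * (|lam| * ‖A‖) := by gcongr
    nlinarith
  · have hconv := norm_add_mul_smul_le (T u) (A u) hθ₀.le hθ₁ lam
    nlinarith

theorem BJOrth.exists_opNorm_le_apply (hX : ReflexiveSpace X) (hT : IsCompactOperator T)
    (hA : IsCompactOperator A) (h : BJOrth T A) (lam : ℝ) :
    ∃ x : X, ‖x‖ ≤ 1 ∧ ‖T‖ ≤ ‖T x‖ ∧ ‖T‖ ≤ ‖T x + lam • A x‖ := by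
  set θ : ℕ → ℝ := fun n => 1 / ((n : ℝ) + 1)
  have hθ₀ : ∀ n, 0 < θ n := fun n => Nat.one_div_pos_of_nat
  have hθ₁ : ∀ n, θ n ≤ 1 := fun n => div_le_one_of_le₀ (by simp) (by positivity)
  choose u hu hTu hTAu using fun n => h.exists_near_norming lam (hθ₀ n) (hθ₁ n)
  obtain ⟨x, hx, φ, hφ, hlim⟩ := (hT.prod hA).exists_subseq_tendsto hX hu
  have hθlim : Tendsto (θ ∘ φ) atTop (𝓝 0) :=
    tendsto_one_div_add_atTop_nhds_zero_nat.comp hφ.tendsto_atTop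
  have hlim₁ : Tendsto (fun n => ‖T‖ - θ (φ n) * (θ (φ n) + |lam| * ‖A‖)) atTop (𝓝 ‖T‖) := by
    simpa using tendsto_const_nhds.sub (hθlim.mul (hθlim.add_const (|lam| * ‖A‖)))
  have hlim₂ : Tendsto (fun n => ‖T‖ - θ (φ n)) atTop (𝓝 ‖T‖) := by
    simpa using tendsto_const_nhds.sub hθlim
  refine ⟨x, hx, le_of_tendsto_of_tendsto' hlim₁ ?_ fun n => hTu (φ n),
    le_of_tendsto_of_tendsto' hlim₂ ?_ fun n => hTAu (φ n)⟩
  · exact ((continuous_norm.comp continuous_fst).tendsto _).comp hlim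
  · exact ((continuous_fst.add (continuous_snd.const_smul lam)).norm.tendsto _).comp hlim

end NormAttainment

section Operators

variable {X Y : Type*} [NormedAddCommGroup X] [NormedSpace ℝ X]
  [NormedAddCommGroup Y] [NormedSpace ℝ Y]

theorem BJOrth.apply_of_normAttainSet_eq_pair (hX : ReflexiveSpace X) {T A : X →L[ℝ] Y}
    (hT : IsCompactOperator T) (hA : IsCompactOperator A) {x₀ : X}
    (hMT : {x : X | ‖x‖ = 1 ∧ ‖T x‖ = ‖T‖} = {x₀, -x₀}) (h : BJOrth T A) :
    BJOrth (T x₀) (A x₀) := by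
  intro lam
  have hx₀ : x₀ ∈ {x : X | ‖x‖ = 1 ∧ ‖T x‖ = ‖T‖} := hMT ▸ Set.mem_insert x₀ _
  obtain ⟨x, hx, hTx, hTAx⟩ := h.exists_opNorm_le_apply hX hT hA lam
  rcases (norm_nonneg T).eq_or_lt with hT0 | hT0
  · rw [hx₀.2, ← hT0]
    exact norm_nonneg _
  have hx1 : ‖x‖ = 1 := le_antisymm hx <|
    (le_mul_iff_one_le_right hT0).mp (hTx.trans (T.le_opNorm x))
  have hxM : x ∈ ({x₀, -x₀} : Set X) := hMT ▸ ⟨hx1, le_antisymm (T.unit_le_opNorm x hx) hTx⟩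
  rw [hx₀.2]
  rcases hxM with hxe | hxe
  · rwa [hxe] at hTAx
  · rwa [hxe, map_neg, map_neg, smul_neg, ← neg_add, norm_neg] at hTAx

theorem bjOrth_smulRight_of_bjOrth_apply {T : X →L[ℝ] Y} {x y : X} {g : StrongDual ℝ X}
    (hg : ‖g‖ ≤ 1) (hgy : g y = ‖y‖) (hy : y ≠ 0) (h : BJOrth (T x) (T y)) :
    BJOrth (g.smulRight (T x)) T := by
  intro μ
  have hy₀ : 0 < ‖y‖ := norm_pos_iff.mpr hy
  have happly : (g.smulRight (T x) + μ • T) y = ‖y‖ • (T x + (μ / ‖y‖) • T y) := by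
    rw [smul_add, smul_smul, mul_div_cancel₀ _ hy₀.ne']
    simp [hgy]
  calc ‖g.smulRight (T x)‖ ≤ ‖T x‖ := by
        rw [ContinuousLinearMap.norm_smulRight_apply]
        exact mul_le_of_le_one_left (norm_nonneg _) hg
    _ ≤ ‖T x + (μ / ‖y‖) • T y‖ := h _
    _ ≤ ‖g.smulRight (T x) + μ • T‖ := by
        have := (g.smulRight (T x) + μ • T).le_opNorm y
        rw [happly, norm_smul, Real.norm_of_nonneg hy₀.le, mul_comm] at this
        exact le_of_mul_le_mul_right this hy₀

end Operators

theorem leftSymmetric_of_rightSymmetric_general {X Y : Type*}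
    [NormedAddCommGroup X] [NormedSpace ℝ X]
    [NormedAddCommGroup Y] [NormedSpace ℝ Y]
    (hX : ReflexiveSpace X)
    (T : X →L[ℝ] Y) (hTc : IsCompactOperator T) (hT : ‖T‖ = 1)
    (x₀ : X)
    (hMT : {x : X | ‖x‖ = 1 ∧ ‖T x‖ = ‖T‖} = {x₀, -x₀})
    (hop : LeftOPAt T x₀)
    (hrs : RightSymmetricCompactOp T) :
    LeftSymmetricPt x₀ := by
  intro y hxy
  rcases eq_or_ne y 0 with rfl | hy
  · exact bjOrth_zero_left x₀
  obtain ⟨g, hg, hgy⟩ := exists_dual_vector ℝ y (norm_ne_zero_iff.mpr hy)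
  have hx₀ : x₀ ∈ {x : X | ‖x‖ = 1 ∧ ‖T x‖ = ‖T‖} := hMT ▸ Set.mem_insert x₀ _
  have hTx₀ : T x₀ ≠ 0 := norm_ne_zero_iff.mp (hx₀.2.trans hT ▸ one_ne_zero)
  have hA := isCompactOperator_smulRight g (T x₀)
  have hTA : BJOrth T (g.smulRight (T x₀)) :=
    hrs _ hA (bjOrth_smulRight_of_bjOrth_apply hg.le hgy hy (hop y hxy))
  have hgx₀ : g x₀ = 0 :=
    (hTA.apply_of_normAttainSet_eq_pair hX hTc hA hMT).eq_zero_of_smul_self hTx₀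
  exact bjOrth_of_dual_apply_eq_zero hg.le hgy hgx₀

/-- Let `T` be a norm-one compact operator from a reflexive Banach space `X` to a
normed space `Y` with `M_T = {x₀, -x₀}`, left orthogonality preserving at `x₀`. If `T` is a
right-symmetric point of the space of compact operators, then `x₀` is left-symmetric. -/
theorem leftSymmetric_of_rightSymmetric {X Y : Type*}
    [NormedAddCommGroup X] [NormedSpace ℝ X] [CompleteSpace X]
    [NormedAddCommGroup Y] [NormedSpace ℝ Y]
    (hX : ReflexiveSpace X)
    (T : X →L[ℝ] Y) (hTc : IsCompactOperator T) (hT : ‖T‖ = 1)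
    (x₀ : X) (hx₀ : ‖x₀‖ = 1)
    (hMT : {x : X | ‖x‖ = 1 ∧ ‖T x‖ = ‖T‖} = {x₀, -x₀})
    (hop : LeftOPAt T x₀)
    (hrs : RightSymmetricCompactOp T) :
    LeftSymmetricPt x₀ :=
  leftSymmetric_of_rightSymmetric_general hX T hTc hT x₀ hMT hop hrs
end

section
/- Let X be a reflexive real Banach space, Y a smooth real normed linear space, and T a compact linear operator from X to Y with operator norm 1 such that M_T = {x₀, −x₀} for some unit vector x₀ ∈ X. If T is left orthogonality preserving at x₀, then either the range of T is one-dimensional, or T is not a right-symmetric point of the space of compact operators from X to Y (with the operator norm). -/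
open Filter Topology Metric

section BirkhoffJames

variable {E : Type*} [NormedAddCommGroup E] [NormedSpace ℝ E]

theorem BJOrth.neg_right {x y : E} (h : BJOrth x y) : BJOrth x (-y) := fun lam => by
  simpa only [smul_neg, neg_smul] using h (-lam)

theorem bjOrth_of_dual {z w : E} {f : StrongDual ℝ E} (hf : ‖f‖ ≤ 1) (hfz : f z = ‖z‖)
    (hfw : f w = 0) : BJOrth z w := fun lam =>
  calc ‖z‖ = f (z + lam • w) := by simp [hfz, hfw]
    _ ≤ ‖f‖ * ‖z + lam • w‖ := (le_abs_self _).trans (f.le_opNorm _)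
    _ ≤ ‖z + lam • w‖ := mul_le_of_le_one_left (norm_nonneg _) hf

/-- James: separate the open ball of radius `‖z‖` from the line `z + ℝ w` by Hahn–Banach. -/
theorem exists_dual_eq_zero_of_bjOrth {z w : E} (hz : z ≠ 0) (h : BJOrth z w) :
    ∃ f : StrongDual ℝ E, ‖f‖ = 1 ∧ f z = ‖z‖ ∧ f w = 0 := by
  have hz' : 0 < ‖z‖ := norm_pos_iff.mpr hz
  have hline : Convex ℝ (Set.range fun t : ℝ => z + t • w) := by
    rintro _ ⟨t₁, rfl⟩ _ ⟨t₂, rfl⟩ a b - - hab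
    exact ⟨a * t₁ + b * t₂, by linear_combination (norm := module) -(hab • z)⟩
  have hdisj : Disjoint (ball (0 : E) ‖z‖) (Set.range fun t : ℝ => z + t • w) := by
    rw [Set.disjoint_right]
    rintro _ ⟨t, rfl⟩ hball
    exact (h t).not_gt (mem_ball_zero_iff.mp hball)
  obtain ⟨f, u, hball, hlineu⟩ := geometric_hahn_banach_open (convex_ball 0 ‖z‖) isOpen_ball
    hline hdisj
  have hfz : u ≤ f z := by simpa using hlineu z ⟨0, by simp⟩
  have hfw : f w = 0 := by
    by_contra hw
    have := hlineu _ ⟨(u - 1 - f z) / f w, rfl⟩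
    rw [map_add, map_smul, smul_eq_mul, div_mul_cancel₀ _ hw] at this
    linarith
  have hclosed : ∀ a ∈ closedBall (0 : E) ‖z‖, f a ≤ u := by
    rw [← closure_ball _ hz'.ne']
    exact closure_minimal (fun a ha => (hball a ha).le) (isClosed_le f.continuous continuous_const)
  have hfnorm : ‖f‖ * ‖z‖ ≤ u := by
    rw [← le_div_iff₀ hz']
    refine ContinuousLinearMap.opNorm_bound_of_ball_bound hz' u f fun a ha =>
      abs_le.mpr ⟨?_, hclosed a ha⟩
    have := hclosed (-a) (by simpa using ha)
    rw [map_neg] at this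
    linarith
  have hfz' : f z = ‖f‖ * ‖z‖ :=
    le_antisymm ((le_abs_self _).trans (f.le_opNorm z)) (hfnorm.trans hfz)
  have hf : 0 < ‖f‖ := by
    have := hball 0 (mem_ball_self hz')
    rw [map_zero] at this
    nlinarith
  refine ⟨‖f‖⁻¹ • f, ?_, ?_, by simp [hfw]⟩
  · rw [norm_smul, norm_inv, norm_norm, inv_mul_cancel₀ hf.ne']
  · simp [hfz', hf.ne']

theorem exists_bjOrth_add_smul (y z : E) : ∃ s : ℝ, BJOrth (y + s • z) z := by
  rcases eq_or_ne z 0 with rfl | hz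
  · exact ⟨0, fun _ => by simp⟩
  have hcoercive : Tendsto (fun s : ℝ => ‖y + s • z‖) (cocompact ℝ) atTop := by
    refine tendsto_atTop_mono (fun s => ?_) (tendsto_atTop_add_const_right _ (-‖y‖)
      (tendsto_norm_cocompact_atTop.atTop_mul_const (norm_pos_iff.mpr hz)))
    have := norm_sub_norm_le (s • z) (-y)
    rw [norm_smul, norm_neg, sub_neg_eq_add, add_comm] at this
    linarith
  obtain ⟨s, hs⟩ := (by fun_prop : Continuous fun s : ℝ => ‖y + s • z‖).exists_forall_le hcoercive
  exact ⟨s, fun lam => by simpa only [add_smul, add_assoc] using hs (s + lam)⟩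

theorem exists_bjOrth_apply_ne_zero {y z : E} (hyz : ¬BJOrth y z) {g : StrongDual ℝ E}
    (hgy : g y = 0) (hgz : g z ≠ 0) : ∃ v : E, BJOrth v z ∧ g v ≠ 0 := by
  obtain ⟨s, hs⟩ := exists_bjOrth_add_smul y z
  refine ⟨_, hs, ?_⟩
  rw [map_add, map_smul, hgy, zero_add, smul_eq_mul]
  rintro hsg
  obtain rfl : s = 0 := (mul_eq_zero.mp hsg).resolve_right hgz
  exact hyz (by simpa using hs)

theorem SmoothPoint.ne_zero_s8 {z : E} (h : SmoothPoint z) : z ≠ 0 := by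
  rintro rfl
  obtain ⟨f, ⟨hf, -⟩, huniq⟩ := h
  have : -f = f := huniq (-f) ⟨by rw [norm_neg, hf], by simp⟩
  rw [neg_eq_iff_add_eq_zero, ← two_smul ℝ, smul_eq_zero] at this
  simp [this.resolve_left two_ne_zero] at hf

theorem SmoothPoint.apply_eq_zero_of_bjOrth {z w : E} (hsm : SmoothPoint z) (h : BJOrth z w)
    {g : StrongDual ℝ E} (hg : ‖g‖ = 1) (hgz : g z = ‖z‖) : g w = 0 := by
  obtain ⟨f, hf, hfz, hfw⟩ := exists_dual_eq_zero_of_bjOrth hsm.ne_zero_s8 h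
  rwa [hsm.unique ⟨hg, hgz⟩ ⟨hf, hfz⟩]

theorem SmoothPoint.exists_not_bjOrth_add_smul {y : E} (hsm : SmoothPoint y) (x : E) {c : ℝ}
    (hc : 0 < c) : ∃ t ∈ Set.Ioo 0 c, ¬BJOrth y (x + t • y) := by
  obtain ⟨g, ⟨hg, hgy⟩, -⟩ := id hsm
  have hy : 0 < ‖y‖ := norm_pos_iff.mpr hsm.ne_zero_s8
  by_contra! h
  have h₂ := hsm.apply_eq_zero_of_bjOrth (h (c / 2) ⟨by positivity, by linarith⟩) hg hgy
  have h₃ := hsm.apply_eq_zero_of_bjOrth (h (c / 3) ⟨by positivity, by linarith⟩) hg hgy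
  simp only [map_add, map_smul, hgy, smul_eq_mul] at h₂ h₃
  nlinarith

theorem sub_mul_le_norm_add_smul {a b : E} {c ε s : ℝ} (hε : 0 < ε) (hεs : ε ≤ s) (ha : ‖a‖ ≤ c)
    (hab : c - ε ^ 2 ≤ ‖a + ε • b‖) : c - s * ε ≤ ‖a + s • b‖ := by
  have hsplit : s • (a + ε • b) = ε • (a + s • b) + (s - ε) • a := by module
  have htri := norm_add_le (ε • (a + s • b)) ((s - ε) • a)
  rw [← hsplit, norm_smul, norm_smul, norm_smul, Real.norm_of_nonneg (hε.trans_le hεs).le,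
    Real.norm_of_nonneg hε.le, Real.norm_of_nonneg (sub_nonneg.mpr hεs)] at htri
  nlinarith [mul_le_mul_of_nonneg_left hab (hε.trans_le hεs).le,
    mul_le_mul_of_nonneg_left ha (sub_nonneg.mpr hεs)]

theorem BJOrth.dual_apply_pos {x y : E} (hxy : BJOrth x y) {t : ℝ} (ht : 0 ≤ t)
    (hty : t * ‖y‖ < ‖x‖) {h : StrongDual ℝ E} (hh : ‖h‖ ≤ 1) (hhxy : h (x + t • y) = ‖x + t • y‖) : 0 < h x := by
  have hhy : h y ≤ ‖y‖ :=
    (le_abs_self _).trans ((h.le_opNorm y).trans (mul_le_of_le_one_left (norm_nonneg y) hh))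
  rw [map_add, map_smul, smul_eq_mul] at hhxy
  nlinarith [hxy t]

end BirkhoffJames

theorem LinearMap.finrank_range_eq_one_of_ker_le {K V W : Type*} [Field K] [AddCommGroup V]
    [Module K V] [AddCommGroup W] [Module K W] {T : V →ₗ[K] W} {f : V →ₗ[K] K} {x₀ : V}
    (hfx₀ : f x₀ = 1) (hTx₀ : T x₀ ≠ 0) (hker : ∀ y, f y = 0 → T y = 0) :
    Module.finrank K (range T) = 1 := by
  have hrange : range T = K ∙ T x₀ := by
    refine le_antisymm ?_ (Submodule.span_le.mpr (by simp))
    rintro _ ⟨x, rfl⟩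
    have := hker (x - f x • x₀) (by simp [hfx₀])
    rw [map_sub, map_smul, sub_eq_zero] at this
    exact this ▸ Submodule.smul_mem _ _ (Submodule.mem_span_singleton_self _)
  rw [hrange, finrank_span_singleton hTx₀]

section Operators

variable {X Y : Type*} [NormedAddCommGroup X] [NormedSpace ℝ X] [NormedAddCommGroup Y]
  [NormedSpace ℝ Y]

theorem ReflexiveSpace.exists_tendsto_dual_apply (hX : ReflexiveSpace X) {ι : Type*}
    (U : Ultrafilter ι) {u : ι → X} {r : ℝ} (hu : ∀ i, ‖u i‖ ≤ r) :
    ∃ x : X, ‖x‖ ≤ r ∧ ∀ φ : StrongDual ℝ X, Tendsto (fun i => φ (u i)) U (𝓝 (φ x)) := by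
  set ψ : ι → WeakDual ℝ (StrongDual ℝ X) :=
    fun i => StrongDual.toWeakDual (NormedSpace.inclusionInDoubleDual ℝ X (u i))
  have hψ : ∀ i, WeakDual.toStrongDual (ψ i) ∈ closedBall 0 r := fun i =>
    (mem_closedBall_zero_iff (E := StrongDual ℝ (StrongDual ℝ X))).mpr
      (((NormedSpace.inclusionInDoubleDualLi ℝ).norm_map (u i)).trans_le (hu i))
  obtain ⟨ξ, hξ, hψξ⟩ := (WeakDual.isCompact_closedBall 0 r).ultrafilter_le_nhds' (U.map ψ)
    (Ultrafilter.mem_map.mpr (Filter.univ_mem' hψ))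
  obtain ⟨x, hx⟩ := hX (WeakDual.toStrongDual ξ)
  refine ⟨x, ?_, fun φ => ?_⟩
  · rw [← (NormedSpace.inclusionInDoubleDualLi ℝ).norm_map x]
    exact (mem_closedBall_zero_iff (E := StrongDual ℝ (StrongDual ℝ X))).mp (hx ▸ hξ)
  · have hξφ : ξ φ = φ x := (DFunLike.congr_fun hx φ).symm
    exact hξφ ▸ ((WeakDual.eval_continuous φ).tendsto ξ).comp hψξ

theorem IsCompactOperator.tendsto_apply_of_tendsto_dual {B : X →L[ℝ] Y}
    (hB : IsCompactOperator B) {ι : Type*} (U : Ultrafilter ι) {u : ι → X} {r : ℝ}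
    (hu : ∀ i, ‖u i‖ ≤ r) {x : X}
    (hx : ∀ φ : StrongDual ℝ X, Tendsto (fun i => φ (u i)) U (𝓝 (φ x))) :
    Tendsto (fun i => B (u i)) U (𝓝 (B x)) := by
  obtain ⟨K, hK, hBK⟩ :=
    IsCompactOperator.image_closedBall_subset_compact (f := (B : X →ₗ[ℝ] Y)) hB r
  obtain ⟨y, -, hy⟩ := hK.ultrafilter_le_nhds' (U.map fun i => B (u i))
    (Ultrafilter.mem_map.mpr (Filter.univ_mem' fun i =>
      hBK ⟨u i, mem_closedBall_zero_iff.mpr (hu i), rfl⟩))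
  have hyB : y = B x := SeparatingDual.eq_iff_forall_dual_eq.mpr fun φ =>
    tendsto_nhds_unique ((φ.continuous.tendsto y).comp hy) (hx (φ.comp B))
  exact hyB ▸ hy

/-- The point `x` is a weak cluster point of almost norming vectors `uₙ` of `T + εₙ A`,
`εₙ → 0`; compactness turns weak into norm convergence of `T uₙ` and `A uₙ`. -/
theorem exists_norm_le_one_le_norm_apply_add_smul (hX : ReflexiveSpace X) {T A : X →L[ℝ] Y}
    (hTc : IsCompactOperator T) (hAc : IsCompactOperator A) (hTA : BJOrth T A) :
    ∃ x : X, ‖x‖ ≤ 1 ∧ ∀ s : ℝ, 0 ≤ s → ‖T‖ ≤ ‖T x + s • A x‖ := by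
  set ε : ℕ → ℝ := fun n => 1 / ((n : ℝ) + 1)
  have hε : ∀ n, 0 < ε n := fun n => Nat.one_div_pos_of_nat
  have hε0 : Tendsto ε atTop (𝓝 0) := tendsto_one_div_add_atTop_nhds_zero_nat
  have hnorming : ∀ n, ∃ u : X, ‖u‖ < 1 ∧ ‖T‖ - ε n ^ 2 < ‖(T + ε n • A) u‖ := fun n =>
    (T + ε n • A).exists_lt_apply_of_lt_opNorm
      ((sub_lt_self _ (pow_pos (hε n) 2)).trans_le (hTA (ε n)))
  choose u hu hTAu using hnorming
  set U := Ultrafilter.of (atTop : Filter ℕ)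
  have hU : ↑U ≤ (atTop : Filter ℕ) := Ultrafilter.of_le _
  obtain ⟨x, hx, hux⟩ := hX.exists_tendsto_dual_apply U fun n => (hu n).le
  have hTu := hTc.tendsto_apply_of_tendsto_dual U (fun n => (hu n).le) hux
  have hAu := hAc.tendsto_apply_of_tendsto_dual U (fun n => (hu n).le) hux
  have hpos : ∀ s : ℝ, 0 < s → ‖T‖ ≤ ‖T x + s • A x‖ := by
    intro s hs
    have hlim : Tendsto (fun n => ‖T‖ - s * ε n) atTop (𝓝 ‖T‖) := by
      simpa using tendsto_const_nhds.sub (hε0.const_mul s)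
    refine le_of_tendsto_of_tendsto (hlim.mono_left hU) (hTu.add (hAu.const_smul s)).norm ?_
    filter_upwards [hU (hε0.eventually_le_const hs)] with n hn
    refine sub_mul_le_norm_add_smul (hε n) hn ?_ (hTAu n).le
    exact (T.le_opNorm _).trans (mul_le_of_le_one_right (norm_nonneg _) (hu n).le)
  refine ⟨x, hx, fun s hs => hs.eq_or_lt.elim (fun h => ?_) (hpos s)⟩
  subst h
  have hcont : Continuous fun s : ℝ => ‖T x + s • A x‖ := by fun_prop
  exact ge_of_tendsto ((hcont.tendsto 0).mono_left nhdsWithin_le_nhds)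
    (eventually_nhdsWithin_of_forall (s := Set.Ioi 0) hpos)

theorem bjOrth_apply_of_bjOrth (hX : ReflexiveSpace X) {T A : X →L[ℝ] Y}
    (hTc : IsCompactOperator T) (hAc : IsCompactOperator A) (hT : T ≠ 0) {x₀ : X}
    (hMT : {x : X | ‖x‖ = 1 ∧ ‖T x‖ = ‖T‖} = {x₀, -x₀}) (hTA : BJOrth T A) :
    BJOrth (T x₀) (A x₀) := by
  have hTx₀ : ‖T x₀‖ = ‖T‖ := (hMT ▸ Set.mem_insert x₀ {-x₀} :).2
  have hpos : ∀ A : X →L[ℝ] Y, IsCompactOperator A → BJOrth T A →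
      ∀ s : ℝ, 0 ≤ s → ‖T x₀‖ ≤ ‖T x₀ + s • A x₀‖ := by
    intro A hAc hTA s hs
    obtain ⟨x, hx, hxA⟩ := exists_norm_le_one_le_norm_apply_add_smul hX hTc hAc hTA
    have hTx : ‖T‖ ≤ ‖T x‖ := by simpa using hxA 0 le_rfl
    have hxM : x ∈ {x : X | ‖x‖ = 1 ∧ ‖T x‖ = ‖T‖} := by
      have hle := T.le_opNorm x
      have hTpos : 0 < ‖T‖ := norm_pos_iff.mpr hT
      refine ⟨le_antisymm hx ?_, le_antisymm (hle.trans ?_) hTx⟩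
      · nlinarith
      · exact mul_le_of_le_one_right hTpos.le hx
    rw [hMT] at hxM
    rcases hxM with rfl | rfl
    · exact hTx₀ ▸ hxA s hs
    · have := hxA s hs
      rwa [map_neg, map_neg, smul_neg, ← neg_add, norm_neg, ← hTx₀] at this
  intro lam
  rcases le_total 0 lam with hlam | hlam
  · exact hpos A hAc hTA lam hlam
  · simpa using hpos (-A) hAc.neg hTA.neg_right (-lam) (neg_nonneg.mpr hlam)

theorem bjOrth_smulRight {T : X →L[ℝ] Y} {u : X} (hu : u ≠ 0) {h : StrongDual ℝ X}
    (hh : ‖h‖ ≤ 1) (hhu : h u = ‖u‖) {v : Y} (hv : BJOrth v (T u)) :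
    BJOrth (h.smulRight v) T := fun lam => by
  have hu' : 0 < ‖u‖ := norm_pos_iff.mpr hu
  have happly : (h.smulRight v + lam • T) u = ‖u‖ • (v + (lam / ‖u‖) • T u) := by
    simp only [add_apply, ContinuousLinearMap.smulRight_apply, hhu, smul_apply, smul_add,
      smul_smul, mul_div_cancel₀ _ hu'.ne']
  calc ‖h.smulRight v‖ ≤ ‖v‖ := by
        rw [ContinuousLinearMap.norm_smulRight_apply]
        exact mul_le_of_le_one_left (norm_nonneg v) hh
    _ ≤ ‖v + (lam / ‖u‖) • T u‖ := hv _
    _ = ‖(h.smulRight v + lam • T) u‖ / ‖u‖ := by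
        rw [happly, norm_smul, norm_norm, mul_div_cancel_left₀ _ hu'.ne']
    _ ≤ ‖h.smulRight v + lam • T‖ := (div_le_iff₀ hu').mpr ((h.smulRight v + lam • T).le_opNorm u)

theorem isCompactOperator_smulRight_s8 (h : StrongDual ℝ X) (v : Y) :
    IsCompactOperator (h.smulRight v) :=
  (isCompactOperator_of_locallyCompactSpace_dom h).continuous_comp
    (by fun_prop : Continuous fun r : ℝ => r • v)

end Operators

theorem rankOne_or_not_rightSymmetric_general {X Y : Type*}
    [NormedAddCommGroup X] [NormedSpace ℝ X]
    [NormedAddCommGroup Y] [NormedSpace ℝ Y]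
    (hX : ReflexiveSpace X)
    (hYsmooth : ∀ y : Y, y ≠ 0 → SmoothPoint y)
    (T : X →L[ℝ] Y) (hTc : IsCompactOperator T) (hT : ‖T‖ = 1)
    (x₀ : X)
    (hMT : {x : X | ‖x‖ = 1 ∧ ‖T x‖ = ‖T‖} = {x₀, -x₀})
    (hop : LeftOPAt T x₀) :
    Module.finrank ℝ (LinearMap.range (T : X →ₗ[ℝ] Y)) = 1 ∨ ¬ RightSymmetricCompactOp T := by
  obtain ⟨hx₀, hTx₀⟩ : x₀ ∈ {x : X | ‖x‖ = 1 ∧ ‖T x‖ = ‖T‖} := hMT ▸ Set.mem_insert x₀ {-x₀}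
  have hTx₀0 : T x₀ ≠ 0 := norm_ne_zero_iff.mp (by simp [hTx₀, hT])
  obtain ⟨f, hf, hfx₀⟩ := exists_dual_vector ℝ x₀ (by simp [hx₀])
  by_cases hker : ∀ y, f y = 0 → T y = 0
  · exact Or.inl (LinearMap.finrank_range_eq_one_of_ker_le (f := f.toLinearMap)
      (by simpa [hx₀] using hfx₀) hTx₀0 hker)
  refine Or.inr fun hRS => ?_
  obtain ⟨y₀, hfy₀, hTy₀⟩ : ∃ y, f y = 0 ∧ T y ≠ 0 := by simpa using hker
  have hx₀y₀ : BJOrth x₀ y₀ := bjOrth_of_dual hf.le hfx₀ hfy₀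
  obtain ⟨g, ⟨hg, hgTx₀⟩, -⟩ := hYsmooth _ hTx₀0
  have hgTy₀ : g (T y₀) = 0 := (hYsmooth _ hTx₀0).apply_eq_zero_of_bjOrth (hop y₀ hx₀y₀) hg hgTx₀
  obtain ⟨t, ⟨ht, hty₀⟩, hnot⟩ := (hYsmooth _ hTy₀).exists_not_bjOrth_add_smul (T x₀)
    (by positivity : 0 < 1 / (‖y₀‖ + 1))
  rw [lt_div_iff₀ (by positivity)] at hty₀
  obtain ⟨v, hv, hgv⟩ := exists_bjOrth_apply_ne_zero hnot hgTy₀ (by simp [hgTx₀, hgTy₀, hTx₀, hT])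
  have hu : x₀ + t • y₀ ≠ 0 := norm_pos_iff.mp (by linarith [hx₀y₀ t])
  obtain ⟨h, hh, hhu⟩ := exists_dual_vector ℝ _ (norm_ne_zero_iff.mpr hu)
  have hhx₀ : 0 < h x₀ := hx₀y₀.dual_apply_pos ht.le (by nlinarith) hh.le hhu
  have hA := isCompactOperator_smulRight_s8 h v
  have hTA := hRS _ hA (bjOrth_smulRight hu hh.le hhu (by simpa using hv))
  have := (hYsmooth _ hTx₀0).apply_eq_zero_of_bjOrth
    (bjOrth_apply_of_bjOrth hX hTc hA (norm_ne_zero_iff.mp (by simp [hT])) hMT hTA) hg hgTx₀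
  simp [hhx₀.ne', hgv] at this

/-- Let `X` be a reflexive Banach space, `Y` a smooth normed space, and
`T : X → Y` a norm-one compact operator with `M_T = {x₀, -x₀}`, left orthogonality preserving
at `x₀`. Then either the range of `T` is one-dimensional, or `T` is not a right-symmetric
point of the space of compact operators from `X` to `Y`. -/
theorem rankOne_or_not_rightSymmetric {X Y : Type*}
    [NormedAddCommGroup X] [NormedSpace ℝ X] [CompleteSpace X]
    [NormedAddCommGroup Y] [NormedSpace ℝ Y]
    (hX : ReflexiveSpace X)
    (hYsmooth : ∀ y : Y, y ≠ 0 → SmoothPoint y)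
    (T : X →L[ℝ] Y) (hTc : IsCompactOperator T) (hT : ‖T‖ = 1)
    (x₀ : X) (hx₀ : ‖x₀‖ = 1)
    (hMT : {x : X | ‖x‖ = 1 ∧ ‖T x‖ = ‖T‖} = {x₀, -x₀})
    (hop : LeftOPAt T x₀) :
    Module.finrank ℝ (LinearMap.range (T : X →ₗ[ℝ] Y)) = 1 ∨ ¬ RightSymmetricCompactOp T :=
  rankOne_or_not_rightSymmetric_general hX hYsmooth T hTc hT x₀ hMT hop
end

section
/- Let X and Y be real normed linear spaces and T a bounded linear operator from X to Y with operator norm 1. If there exists ε ∈ [0,1) such that T is ε-approximately orthogonality preserving in the sense of Dragomir (ε-DAOP), then T is injective. -/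
/-!
If `T x = 0` with `x ≠ 0`, pick for any `y` a point `x + c • y` of the line `x + ℝ y` closest to
the origin, so that `x + c • y ⊥_B y`. The DAOP inequality at `λ = -c` reads
`√(1 - ε²) ‖c • T y‖ ≤ 0`, so `c = 0` whenever `T y ≠ 0`: thus `x ⊥_B y` for every `y` outside
`ker T`. Since `T ≠ 0`, the vectors `s • z - x` with `T z ≠ 0`, `s > 0` are such `y`, and
`x ⊥_B (s • z - x)` gives `‖x‖ ≤ s ‖z‖` for all `s > 0`.
-/

def IsDAOP {X Y : Type*} [NormedAddCommGroup X] [NormedSpace ℝ X]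
    [NormedAddCommGroup Y] [NormedSpace ℝ Y] (ε : ℝ) (T : X →L[ℝ] Y) : Prop :=
  ∀ x y : X, BJOrth x y → ApproxOrthD ε (T x) (T y)

theorem exists_add_smul_bjOrth {E : Type*} [NormedAddCommGroup E] [NormedSpace ℝ E] (x y : E) :
    ∃ c : ℝ, BJOrth (x + c • y) y := by
  have hbdd : Bornology.IsBounded {v : ℝ ∙ y | ‖x + v‖ ≤ ‖x + (0 : ℝ ∙ y)‖} := by
    refine (Metric.isBounded_closedBall (x := 0) (r := 2 * ‖x‖)).subset fun v hv => ?_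
    rw [Set.mem_ofPred_eq, Submodule.coe_zero, add_zero] at hv
    rw [mem_closedBall_zero_iff, Submodule.coe_norm]
    calc ‖(v : E)‖ = ‖(x + v) - x‖ := by rw [add_sub_cancel_left]
      _ ≤ ‖x + v‖ + ‖x‖ := norm_sub_le _ _
      _ ≤ 2 * ‖x‖ := by linarith
  obtain ⟨v, hv⟩ := (show Continuous fun v : ℝ ∙ y => ‖x + v‖ by fun_prop)
    |>.exists_forall_le_of_isBounded 0 hbdd
  obtain ⟨c, hc⟩ := Submodule.mem_span_singleton.1 v.2
  refine ⟨c, fun lam => ?_⟩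
  simpa [hc, add_assoc] using hv (v + lam • ⟨y, Submodule.mem_span_singleton_self y⟩)

theorem ApproxOrthD.smul_eq_zero {E : Type*} [NormedAddCommGroup E] [NormedSpace ℝ E]
    {ε c : ℝ} {v : E} (hε : ε ^ 2 < 1) (h : ApproxOrthD ε (c • v) v) : c • v = 0 := by
  have hsqrt : 0 < Real.sqrt (1 - ε ^ 2) := Real.sqrt_pos.2 (by linarith)
  have hle := h (-c)
  rw [neg_smul, add_neg_cancel, norm_zero] at hle
  exact norm_le_zero_iff.1 (nonpos_of_mul_nonpos_right hle hsqrt)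

namespace IsDAOP

variable {X Y : Type*} [NormedAddCommGroup X] [NormedSpace ℝ X]
    [NormedAddCommGroup Y] [NormedSpace ℝ Y] {ε : ℝ} {T : X →L[ℝ] Y}

theorem bjOrth_of_map_eq_zero (hT : IsDAOP ε T) (hε : ε ^ 2 < 1) {x y : X} (hx : T x = 0)
    (hy : T y ≠ 0) : BJOrth x y := by
  obtain ⟨c, hc⟩ := exists_add_smul_bjOrth x y
  have hTc : T (x + c • y) = c • T y := by rw [map_add, map_smul, hx, zero_add]
  have hc0 : c = 0 := by
    have := hT _ _ hc
    rw [hTc] at this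
    exact (smul_eq_zero.1 (this.smul_eq_zero hε)).resolve_right hy
  simpa [hc0] using hc

theorem eq_zero_of_map_eq_zero (hT : IsDAOP ε T) (hε : ε ^ 2 < 1) {x z : X} (hx : T x = 0)
    (hz : T z ≠ 0) : x = 0 := by
  have hbound : ∀ s : ℝ, 0 < s → ‖x‖ ≤ s * ‖z‖ := fun s hs => by
    have hy : T (s • z - x) ≠ 0 := by
      rw [map_sub, map_smul, hx, sub_zero]
      exact smul_ne_zero hs.ne' hz
    simpa [norm_smul, abs_of_pos hs] using hT.bjOrth_of_map_eq_zero hε hx hy 1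
  by_contra hx0
  have hxpos : 0 < ‖x‖ := norm_pos_iff.2 hx0
  have hzpos : 0 < ‖z‖ := norm_pos_iff.2 fun h => hz (by rw [h, map_zero])
  have := hbound (‖x‖ / (2 * ‖z‖)) (by positivity)
  rw [div_mul_eq_mul_div, mul_div_mul_right _ _ hzpos.ne'] at this
  linarith

end IsDAOP

/-- A norm-one bounded linear operator `T : X → Y` that is `ε`-approximately
orthogonality preserving in the sense of Dragomir for some `ε ∈ [0,1)` is injective. -/
theorem injective_of_DAOP {X Y : Type*} [NormedAddCommGroup X] [NormedSpace ℝ X]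
    [NormedAddCommGroup Y] [NormedSpace ℝ Y]
    (T : X →L[ℝ] Y) (hT : ‖T‖ = 1)
    (h : ∃ ε : ℝ, 0 ≤ ε ∧ ε < 1 ∧ ∀ x y : X, BJOrth x y → ApproxOrthD ε (T x) (T y)) :
    Function.Injective T := by
  obtain ⟨ε, hε0, hε1, hDAOP⟩ := h
  have hε : ε ^ 2 < 1 := by nlinarith
  have hT0 : T ≠ 0 := by
    rintro rfl
    simp at hT
  obtain ⟨z, hz⟩ := DFunLike.ne_iff.1 hT0
  exact (injective_iff_map_eq_zero T).2 fun x hx =>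
    IsDAOP.eq_zero_of_map_eq_zero hDAOP hε hx hz
end

section
/- Let X and Y be real normed linear spaces and T a bounded linear operator from X to Y with operator norm 1. If there exists ε ∈ [0,1) such that T is ε-approximately orthogonality reversing in the sense of Dragomir (ε-DAOR), then T is injective. -/
/-! If `T x₀ = 0` and `T u ≠ 0`, take a norming functional `f` of `u`. The vector
`v = f u • x₀ - f x₀ • u` lies in `ker f`, so `u ⊥_B v` and hence `T v ⊥_D^ε T u`; but
`T v = -(f x₀) • T u` is a multiple of `T u`, which forces `T v = 0` and so `f x₀ = 0`, i.e.
`u ⊥_B x₀`. Applied to `u = y + s • x₀` for a fixed `y ∉ ker T` this gives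
`‖y + s • x₀‖ ≤ ‖y‖` for every real `s`, which is only possible if `x₀ = 0`. -/

def IsDAOR {X Y : Type*} [NormedAddCommGroup X] [NormedSpace ℝ X]
    [NormedAddCommGroup Y] [NormedSpace ℝ Y] (ε : ℝ) (T : X →L[ℝ] Y) : Prop :=
  ∀ x y : X, BJOrth x y → ApproxOrthD ε (T y) (T x)

section

variable {E : Type*} [NormedAddCommGroup E] [NormedSpace ℝ E]

theorem bjOrth_of_dual_s15 {x y : E} (f : StrongDual ℝ E) (hf : ‖f‖ ≤ 1) (hfx : f x = ‖x‖)
    (hfy : f y = 0) : BJOrth x y := fun lam =>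
  calc ‖x‖ = f (x + lam • y) := by simp [hfx, hfy]
    _ ≤ ‖f (x + lam • y)‖ := Real.le_norm_self _
    _ ≤ ‖x + lam • y‖ := (f.le_of_opNorm_le hf _).trans_eq (one_mul _)

theorem ApproxOrthD.eq_zero_of_add_smul_eq_zero {ε : ℝ} {x y : E} (h : ApproxOrthD ε x y)
    (hε : ε ^ 2 < 1) {c : ℝ} (hc : x + c • y = 0) : x = 0 := by
  have hsqrt : 0 < √(1 - ε ^ 2) := Real.sqrt_pos.2 (by linarith)
  have hx := h c
  rw [hc, norm_zero] at hx
  exact norm_le_zero_iff.1 (nonpos_of_mul_nonpos_right hx hsqrt)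

theorem eq_zero_of_forall_norm_add_smul_le {x y : E} (h : ∀ s : ℝ, ‖y + s • x‖ ≤ ‖y‖) :
    x = 0 := by
  by_contra hx
  have hx_pos : 0 < ‖x‖ := norm_pos_iff.2 hx
  obtain ⟨s, hs⟩ : ∃ s : ℝ, ‖s • x‖ = 2 * ‖y‖ + 1 :=
    ⟨(2 * ‖y‖ + 1) / ‖x‖, by
      rw [norm_smul, Real.norm_of_nonneg (by positivity), div_mul_cancel₀ _ hx_pos.ne']⟩
  have := norm_sub_le (y + s • x) y
  rw [add_sub_cancel_left, hs] at this
  linarith [h s]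

end

theorem IsDAOR.bjOrth_of_map_eq_zero {X Y : Type*} [NormedAddCommGroup X] [NormedSpace ℝ X]
    [NormedAddCommGroup Y] [NormedSpace ℝ Y] {ε : ℝ} {T : X →L[ℝ] Y} (hT : IsDAOR ε T)
    (hε : ε ^ 2 < 1) {x u : X} (hx : T x = 0) (hu : T u ≠ 0) : BJOrth u x := by
  obtain ⟨f, hf, hfu⟩ := exists_dual_vector'' ℝ u
  set v := f u • x - f x • u
  have hu_v : BJOrth u v := bjOrth_of_dual_s15 f hf hfu (by simp [v, mul_comm])
  have hTv : T v = 0 := (hT u v hu_v).eq_zero_of_add_smul_eq_zero hε (c := f x) (by simp [v, hx])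
  have hfx : f x = 0 := by simpa [v, hx, hu] using hTv
  exact bjOrth_of_dual_s15 f hf hfu hfx

/-- A norm-one bounded linear operator `T : X → Y` that is `ε`-approximately
orthogonality reversing in the sense of Dragomir for some `ε ∈ [0,1)` is injective. -/
theorem injective_of_DAOR {X Y : Type*} [NormedAddCommGroup X] [NormedSpace ℝ X]
    [NormedAddCommGroup Y] [NormedSpace ℝ Y]
    (T : X →L[ℝ] Y) (hT : ‖T‖ = 1)
    (h : ∃ ε : ℝ, 0 ≤ ε ∧ ε < 1 ∧ ∀ x y : X, BJOrth x y → ApproxOrthD ε (T y) (T x)) :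
    Function.Injective T := by
  obtain ⟨ε, hε₀, hε₁, hDAOR : IsDAOR ε T⟩ := h
  have hε : ε ^ 2 < 1 := by nlinarith
  obtain ⟨y, hy⟩ : ∃ y, T y ≠ 0 := by
    by_contra! hzero
    simp [show T = 0 from ContinuousLinearMap.ext fun z => by simp [hzero z]] at hT
  refine (injective_iff_map_eq_zero T).2 fun x hx =>
    eq_zero_of_forall_norm_add_smul_le (y := y) fun s => ?_
  have hTu : T (y + s • x) ≠ 0 := by simpa [hx] using hy
  simpa using hDAOR.bjOrth_of_map_eq_zero hε hx hTu (-s)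
end

section
/- Let X be a finite-dimensional real Banach space, Y a real normed linear space, and T a bounded linear operator from X to Y with operator norm 1. Then the following are equivalent: (i) there exists ε₁ ∈ [0,1) such that T is ε₁-DAOP; (ii) there exists ε₂ ∈ [0,1) such that T is ε₂-DAOR; (iii) T is injective. -/
section Aux
variable {X Y : Type*} [NormedAddCommGroup X] [NormedSpace ℝ X]
  [NormedAddCommGroup Y] [NormedSpace ℝ Y]

lemma exists_min_line (z a : X) (ha : a ≠ 0) :
    ∃ μ : ℝ, ∀ t : ℝ, ‖z + μ • a‖ ≤ ‖z + t • a‖ := by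
  have hc : Continuous fun t : ℝ => ‖z + t • a‖ := by continuity
  have hapos : 0 < ‖a‖ := norm_pos_iff.mpr ha
  set R : ℝ := 2 * ‖z‖ / ‖a‖ with hR
  have hR0 : 0 ≤ R := by positivity
  obtain ⟨μ, hμmem, hμ⟩ := (isCompact_Icc (a := -R) (b := R)).exists_isMinOn
    ⟨0, by constructor <;> linarith⟩ hc.continuousOn
  refine ⟨μ, fun t => ?_⟩
  by_cases ht : t ∈ Set.Icc (-R) R
  · exact hμ ht
  · have h0 : ‖z + μ • a‖ ≤ ‖z + (0:ℝ) • a‖ := hμ ⟨by linarith, hR0⟩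
    simp only [zero_smul, add_zero] at h0
    have htR : R < |t| := by
      rw [Set.mem_Icc, not_and_or, not_le, not_le] at ht
      rcases ht with h | h
      · rw [abs_of_neg (by linarith)]; linarith
      · rw [abs_of_pos (by linarith)]; exact h
    have h1 : 2 * ‖z‖ < |t| * ‖a‖ := by
      have := mul_lt_mul_of_pos_right htR hapos
      rw [hR, div_mul_cancel₀] at this
      · exact this
      · exact ne_of_gt hapos
    have h2 : ‖t • a‖ ≤ ‖z + t • a‖ + ‖z‖ := by
      calc ‖t • a‖ = ‖(z + t • a) + (-z)‖ := by rw [show (z + t • a) + (-z) = t • a by abel]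
        _ ≤ ‖z + t • a‖ + ‖-z‖ := norm_add_le _ _
        _ = ‖z + t • a‖ + ‖z‖ := by rw [norm_neg]
    rw [norm_smul, Real.norm_eq_abs] at h2
    linarith

lemma noninj_pair (T : X →L[ℝ] Y) (h : ¬ Function.Injective T) (hT0 : ∃ x, T x ≠ 0) :
    ∃ u v : X, BJOrth u v ∧ ∃ μ : ℝ, μ ≠ 0 ∧ T u = μ • T v ∧ T v ≠ 0 := by
  obtain ⟨x, hx⟩ := hT0
  have hz' : ∃ z, z ≠ 0 ∧ T z = 0 := by
    by_contra hc; push_neg at hc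
    apply h
    intro a b hab
    by_contra hne
    exact hc (a - b) (sub_ne_zero.mpr hne) (by rw [map_sub, hab, sub_self])
  obtain ⟨z, hz, hTz⟩ := hz'
  have hTa : ∀ t : ℝ, T (x + t • z) = T x := by
    intro t; rw [map_add, map_smul, hTz, smul_zero, add_zero]
  have ha : ∀ t : ℝ, x + t • z ≠ 0 := by
    intro t h0
    apply hx
    rw [← hTa t, h0, map_zero]
  choose μf hμf using fun t => exists_min_line z (x + t • z) (ha t)
  by_cases hall : ∀ t, μf t = 0
  · exfalso
    have horth : ∀ t lam : ℝ, ‖z‖ ≤ ‖z + lam • (x + t • z)‖ := by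
      intro t lam
      have h1 := hμf t lam
      rw [hall t, zero_smul, add_zero] at h1
      exact h1
    have hzpos : 0 < ‖z‖ := norm_pos_iff.mpr hz
    set lam : ℝ := ‖z‖ / (4 * (‖x‖ + 1)) with hlamdef
    have hlam : 0 < lam := by positivity
    have hkey := horth (-1 / (2 * lam)) lam
    have hv : z + lam • (x + (-1 / (2 * lam)) • z) = (1/2 : ℝ) • z + lam • x := by
      have hl : lam * (-1 / (2 * lam)) = -(1/2) := by field_simp
      rw [smul_add, smul_smul, hl]
      module
    rw [hv] at hkey
    have hub : ‖(1/2 : ℝ) • z + lam • x‖ ≤ (1/2) * ‖z‖ + lam * ‖x‖ := by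
      calc ‖(1/2 : ℝ) • z + lam • x‖ ≤ ‖(1/2 : ℝ) • z‖ + ‖lam • x‖ := norm_add_le _ _
        _ = (1/2) * ‖z‖ + lam * ‖x‖ := by
            rw [norm_smul, norm_smul, Real.norm_eq_abs, Real.norm_eq_abs,
              abs_of_pos hlam, abs_of_pos (by norm_num : (0:ℝ) < 1/2)]
    have hsm : lam * ‖x‖ < ‖z‖ / 4 := by
      rw [hlamdef]
      rw [div_mul_eq_mul_div, div_lt_div_iff₀ (by positivity) (by norm_num)]
      nlinarith [norm_nonneg x]
    linarith
  · push_neg at hall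
    obtain ⟨t, hμ0⟩ := hall
    refine ⟨z + μf t • (x + t • z), x + t • z, ?_, μf t, hμ0, ?_, ?_⟩
    · intro lam
      have h1 := hμf t (μf t + lam)
      rw [add_smul, ← add_assoc] at h1
      exact h1
    · rw [map_add, map_smul, hTz, zero_add]
    · rw [hTa t]; exact hx

lemma bj_rev {x y : X} (h : BJOrth x y) : ∀ lam : ℝ, ‖y‖ / 2 ≤ ‖y + lam • x‖ := by
  intro lam
  rcases le_or_gt (‖y‖ / 2) (|lam| * ‖x‖) with hc | hc
  · rcases eq_or_ne lam 0 with rfl | hlam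
    · simp only [zero_smul, add_zero]
      linarith [norm_nonneg y]
    · have h1 := h lam⁻¹
      have heq : ‖y + lam • x‖ = |lam| * ‖x + lam⁻¹ • y‖ := by
        rw [← Real.norm_eq_abs, ← norm_smul, smul_add, smul_smul,
          mul_inv_cancel₀ hlam, one_smul]
        rw [add_comm]
      rw [heq]
      calc ‖y‖ / 2 ≤ |lam| * ‖x‖ := hc
        _ ≤ |lam| * ‖x + lam⁻¹ • y‖ := mul_le_mul_of_nonneg_left h1 (abs_nonneg _)
  · have h2 : ‖y‖ - ‖lam • x‖ ≤ ‖y + lam • x‖ := by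
      calc ‖y‖ - ‖lam • x‖ = ‖(y + lam • x) + (-(lam • x))‖ - ‖lam • x‖ := by
            rw [show (y + lam • x) + (-(lam • x)) = y by abel]
        _ ≤ (‖y + lam • x‖ + ‖lam • x‖) - ‖lam • x‖ := by
            have := norm_add_le (y + lam • x) (-(lam • x))
            rw [norm_neg] at this; linarith
        _ = ‖y + lam • x‖ := by ring
    rw [norm_smul, Real.norm_eq_abs] at h2
    linarith

end Aux

section Main
variable {X Y : Type*} [NormedAddCommGroup X] [NormedSpace ℝ X]
  [NormedAddCommGroup Y] [NormedSpace ℝ Y]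

lemma sqrt_pos_of_eps {ε : ℝ} (hε0 : 0 ≤ ε) (hε1 : ε < 1) :
    0 < Real.sqrt (1 - ε ^ 2) :=
  Real.sqrt_pos.mpr (by nlinarith)

lemma daop_inj (T : X →L[ℝ] Y) (hT0 : ∃ x, T x ≠ 0) {ε : ℝ} (hε0 : 0 ≤ ε) (hε1 : ε < 1)
    (hd : ∀ x y : X, BJOrth x y → ApproxOrthD ε (T x) (T y)) :
    Function.Injective T := by
  by_contra h
  obtain ⟨u, v, huv, μ, hμ, hTu, hTv⟩ := noninj_pair T h hT0
  have hkey := hd u v huv (-μ)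
  rw [hTu, show μ • T v + (-μ) • T v = 0 by module, norm_zero, norm_smul,
    Real.norm_eq_abs] at hkey
  have h1 : 0 < |μ| := abs_pos.mpr hμ
  have h2 : 0 < ‖T v‖ := norm_pos_iff.mpr hTv
  have h3 := mul_pos (sqrt_pos_of_eps hε0 hε1) (mul_pos h1 h2)
  linarith

lemma daor_inj (T : X →L[ℝ] Y) (hT0 : ∃ x, T x ≠ 0) {ε : ℝ} (hε0 : 0 ≤ ε) (hε1 : ε < 1)
    (hd : ∀ x y : X, BJOrth x y → ApproxOrthD ε (T y) (T x)) :
    Function.Injective T := by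
  by_contra h
  obtain ⟨u, v, huv, μ, hμ, hTu, hTv⟩ := noninj_pair T h hT0
  have hkey := hd u v huv (-μ⁻¹)
  rw [hTu, show T v + (-μ⁻¹) • μ • T v = (1 - μ⁻¹ * μ) • T v by module,
    inv_mul_cancel₀ hμ, sub_self, zero_smul, norm_zero] at hkey
  have h2 : 0 < ‖T v‖ := norm_pos_iff.mpr hTv
  have h3 := mul_pos (sqrt_pos_of_eps hε0 hε1) h2
  linarith

lemma inj_both [FiniteDimensional ℝ X] (T : X →L[ℝ] Y) (hT : ‖T‖ = 1)
    (h : Function.Injective T) :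
    ∃ ε : ℝ, 0 ≤ ε ∧ ε < 1 ∧ (∀ x y : X, BJOrth x y → ApproxOrthD ε (T x) (T y)) ∧
      (∀ x y : X, BJOrth x y → ApproxOrthD ε (T y) (T x)) := by
  obtain ⟨K, hK, hanti⟩ := (T : X →ₗ[ℝ] Y).exists_antilipschitzWith
    (LinearMap.ker_eq_bot.mpr h)
  have hlow : ∀ x : X, ‖x‖ ≤ K * ‖T x‖ := by
    intro x
    have := hanti.le_mul_dist x 0
    simpa [dist_eq_norm] using this
  have hKpos : (0 : ℝ) < K := hK
  set m : ℝ := min (1 / (2 * K)) (1 / 2) with hm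
  have hm0 : 0 < m := by
    apply lt_min
    · positivity
    · norm_num
  have hm1 : m ≤ 1 / 2 := min_le_right _ _
  have hmlow : ∀ x : X, m * ‖x‖ ≤ ‖T x‖ := by
    intro x
    have h1 := hlow x
    have h2 : m ≤ 1 / (2 * K) := min_le_left _ _
    have h3 : 0 ≤ ‖T x‖ := norm_nonneg _
    calc m * ‖x‖ ≤ (1 / (2 * K)) * ‖x‖ := by
          apply mul_le_mul_of_nonneg_right h2 (norm_nonneg x)
      _ ≤ (1 / (2 * K)) * (K * ‖T x‖) := by
          apply mul_le_mul_of_nonneg_left h1 (by positivity)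
      _ = ‖T x‖ / 2 := by field_simp
      _ ≤ ‖T x‖ := by linarith
  have hup : ∀ x : X, ‖T x‖ ≤ ‖x‖ := by
    intro x
    have := T.le_opNorm x
    rwa [hT, one_mul] at this
  set c : ℝ := m / 2 with hc
  have hc0 : 0 < c := by positivity
  have hc1 : c < 1 := by linarith
  refine ⟨Real.sqrt (1 - c ^ 2), Real.sqrt_nonneg _, ?_, ?_, ?_⟩
  · have hlt : 1 - c ^ 2 < 1 := by nlinarith
    have := Real.sqrt_lt_sqrt (by nlinarith) hlt
    simpa [Real.sqrt_one] using this.trans_le (le_of_eq Real.sqrt_one)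
  all_goals
    intro x y hxy lam
    rw [Real.sq_sqrt (by nlinarith : (0:ℝ) ≤ 1 - c ^ 2),
      show 1 - (1 - c ^ 2) = c ^ 2 by ring, Real.sqrt_sq hc0.le]
  · calc c * ‖T x‖ ≤ m * ‖T x‖ := by nlinarith [norm_nonneg (T x)]
      _ ≤ m * ‖x‖ := mul_le_mul_of_nonneg_left (hup x) hm0.le
      _ ≤ m * ‖x + lam • y‖ := mul_le_mul_of_nonneg_left (hxy lam) hm0.le
      _ ≤ ‖T (x + lam • y)‖ := hmlow _
      _ = ‖T x + lam • T y‖ := by rw [map_add, map_smul]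
  · calc c * ‖T y‖ ≤ c * ‖y‖ := mul_le_mul_of_nonneg_left (hup y) hc0.le
      _ = m * (‖y‖ / 2) := by rw [hc]; ring
      _ ≤ m * ‖y + lam • x‖ := mul_le_mul_of_nonneg_left (bj_rev hxy lam) hm0.le
      _ ≤ ‖T (y + lam • x)‖ := hmlow _
      _ = ‖T y + lam • T x‖ := by rw [map_add, map_smul]

end Main

/-- For a norm-one bounded linear operator `T` from a finite-dimensional Banach
space `X` to a normed space `Y`, the following are equivalent: `T` is `ε₁`-DAOP for some
`ε₁ ∈ [0,1)`; `T` is `ε₂`-DAOR for some `ε₂ ∈ [0,1)`; `T` is injective. -/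
theorem DAOP_iff_DAOR_iff_injective {X Y : Type*}
    [NormedAddCommGroup X] [NormedSpace ℝ X] [FiniteDimensional ℝ X] [CompleteSpace X]
    [NormedAddCommGroup Y] [NormedSpace ℝ Y]
    (T : X →L[ℝ] Y) (hT : ‖T‖ = 1) :
    ((∃ ε₁ : ℝ, 0 ≤ ε₁ ∧ ε₁ < 1 ∧ ∀ x y : X, BJOrth x y → ApproxOrthD ε₁ (T x) (T y)) ↔
      (∃ ε₂ : ℝ, 0 ≤ ε₂ ∧ ε₂ < 1 ∧ ∀ x y : X, BJOrth x y → ApproxOrthD ε₂ (T y) (T x))) ∧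
    ((∃ ε₂ : ℝ, 0 ≤ ε₂ ∧ ε₂ < 1 ∧ ∀ x y : X, BJOrth x y → ApproxOrthD ε₂ (T y) (T x)) ↔
      Function.Injective T) := by
  have hT0 : ∃ x, T x ≠ 0 := by
    by_contra hc
    push_neg at hc
    have hz : T = 0 := ContinuousLinearMap.ext fun x => by simp [hc x]
    rw [hz, norm_zero] at hT
    norm_num at hT
  constructor
  · constructor
    · rintro ⟨ε, hε0, hε1, hd⟩
      obtain ⟨ε', h0, h1, _, h3⟩ := inj_both T hT (daop_inj T hT0 hε0 hε1 hd)
      exact ⟨ε', h0, h1, h3⟩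
    · rintro ⟨ε, hε0, hε1, hd⟩
      obtain ⟨ε', h0, h1, h2, _⟩ := inj_both T hT (daor_inj T hT0 hε0 hε1 hd)
      exact ⟨ε', h0, h1, h2⟩
  · constructor
    · rintro ⟨ε, hε0, hε1, hd⟩
      exact daor_inj T hT0 hε0 hε1 hd
    · intro h
      obtain ⟨ε', h0, h1, _, h3⟩ := inj_both T hT h
      exact ⟨ε', h0, h1, h3⟩
end
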